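/- arXiv:1402.5547 — 11 statements merged into one kernel-verified Lean document; each statement's English description precedes it below -/
import Mathlib

section
/- If k balls are drawn with replacement from an urn containing n balls of m colours with x_i balls of colour i, then the joint distribution of the counts of distinct balls of each colour drawn satisfies P(Y_1(k)=j_1,...,Y_m(k)=j_m) = (1/n^k) · binom(x_1,j_1)···binom(x_m,j_m) · Sur(k, j_1+...+j_m), where Sur(k,r) is the number of surjections from a k-element set onto an r-element set. -/
/-!
Draw sequences are maps `f : Fin k → Fin n`; sort them by their image `S`. The maps with image
`S` are the surjections onto `S`, so there are `Sur k #S` of them. The event depends on `f` only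
through `S`, and says that `S` contains exactly `j i` balls of colour `i`; such `S` have
`#S = ∑ i, j i`, and they are chosen independently inside the colour classes, in
`∏ i, (x i).choose (j i)` ways.
-/

open Finset

/-- The number of surjective maps from `Fin k` onto `Fin r`. -/
noncomputable def Sur (k r : ℕ) : ℕ :=
  Nat.card {f : Fin k → Fin r // Function.Surjective f}

section Surjections

variable {α β : Type*}

def Equiv.surjectiveCongr {α' β' : Type*} (e : α ≃ α') (e' : β ≃ β') :
    {f : α → β // Function.Surjective f} ≃ {f : α' → β' // Function.Surjective f} :=
  (e.arrowCongr e').subtypeEquiv fun f => by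
    change _ ↔ Function.Surjective (e' ∘ f ∘ e.symm)
    rw [EquivLike.comp_surjective, EquivLike.surjective_comp]

theorem card_surjective_eq_sur [Fintype α] [Fintype β] :
    Nat.card {f : α → β // Function.Surjective f} = Sur (Fintype.card α) (Fintype.card β) :=
  Nat.card_congr (Equiv.surjectiveCongr (Fintype.equivFin α) (Fintype.equivFin β))

variable [Fintype α] [DecidableEq β]

def imageUnivEqEquivSurjective (S : Finset β) :
    {f : α → β // univ.image f = S} ≃ {g : α → S // Function.Surjective g} where
  toFun f := ⟨fun a => ⟨f.1 a, by simpa only [f.2] using mem_image_of_mem f.1 (mem_univ a)⟩,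
    fun b => by
      obtain ⟨a, -, ha⟩ := mem_image.mp (f.2.symm ▸ b.2 : b.1 ∈ univ.image f.1)
      exact ⟨a, Subtype.ext ha⟩⟩
  invFun g := ⟨fun a => g.1 a, by
    ext b
    refine ⟨fun hb => ?_, fun hb => ?_⟩
    · obtain ⟨a, -, rfl⟩ := mem_image.mp hb
      exact (g.1 a).2
    · obtain ⟨a, ha⟩ := g.2 ⟨b, hb⟩
      exact mem_image.mpr ⟨a, mem_univ a, congrArg Subtype.val ha⟩⟩
  left_inv _ := rfl
  right_inv _ := rfl

theorem card_image_univ_eq (S : Finset β) :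
    Nat.card {f : α → β // univ.image f = S} = Sur (Fintype.card α) #S := by
  rw [Nat.card_congr (imageUnivEqEquivSurjective S), card_surjective_eq_sur, Fintype.card_coe]

theorem card_pred_image_univ [Fintype β] (P : Finset β → Prop) [DecidablePred P] :
    Nat.card {f : α → β // P (univ.image f)} = ∑ S with P S, Sur (Fintype.card α) #S := by
  classical
  rw [Nat.card_eq_fintype_card, Fintype.card_subtype,
    card_eq_sum_card_fiberwise (f := fun f => univ.image f) (t := {S | P S})
      (fun f hf => by simpa using hf)]
  refine sum_congr rfl fun S hS => ?_
  rw [← card_image_univ_eq, Nat.card_eq_fintype_card, Fintype.card_subtype, filter_filter]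
  congr 1
  ext f
  simp only [mem_filter, mem_univ, true_and] at hS ⊢
  exact ⟨And.right, fun h => ⟨h ▸ hS, h⟩⟩

end Surjections

section Colourings

variable {β ι : Type*} [Fintype ι] [DecidableEq ι] (c : β → ι)

theorem card_eq_sum_of_card_fiber_eq {S : Finset β} {j : ι → ℕ}
    (hS : ∀ i, #{b ∈ S | c b = i} = j i) : #S = ∑ i, j i := by
  rw [card_eq_sum_card_fiberwise fun b _ => mem_univ (c b)]
  exact sum_congr rfl fun i _ => hS i

variable [DecidableEq β]

theorem filter_biUnion_eq_of_forall_mem {T : ι → Finset β} (hT : ∀ i, ∀ b ∈ T i, c b = i)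
    (i : ι) : {b ∈ univ.biUnion T | c b = i} = T i := by
  ext b
  simp only [mem_filter, mem_biUnion, mem_univ, true_and]
  constructor
  · rintro ⟨⟨i', hb⟩, rfl⟩
    rwa [hT i' b hb]
  · exact fun hb => ⟨⟨i, hb⟩, hT i b hb⟩

variable [Fintype β]

theorem card_finset_with_fiber_card_eq (j : ι → ℕ) :
    #{S : Finset β | ∀ i, #{b ∈ S | c b = i} = j i} = ∏ i, (#{b | c b = i}).choose (j i) := by
  simp_rw [← card_powersetCard, ← Fintype.card_piFinset]
  have mem_fiber : ∀ T ∈ Fintype.piFinset fun i => powersetCard (j i) {b | c b = i},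
      ∀ i, ∀ b ∈ T i, c b = i := fun T hT i b hb =>
    (mem_filter.mp ((mem_powersetCard.mp (Fintype.mem_piFinset.mp hT i)).1 hb)).2
  refine card_bij' (fun S _ i => {b ∈ S | c b = i}) (fun T _ => univ.biUnion T) ?_ ?_ ?_ ?_
  · intro S hS
    simp only [Fintype.mem_piFinset, mem_powersetCard]
    exact fun i => ⟨filter_subset_filter _ (subset_univ S), (mem_filter.mp hS).2 i⟩
  · intro T hT
    simp only [mem_filter, mem_univ, true_and, filter_biUnion_eq_of_forall_mem c (mem_fiber T hT)]
    exact fun i => (mem_powersetCard.mp (Fintype.mem_piFinset.mp hT i)).2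
  · exact fun S _ => biUnion_filter_eq_of_maps_to fun _ _ => mem_univ _
  · exact fun T hT => funext (filter_biUnion_eq_of_forall_mem c (mem_fiber T hT))

end Colourings

theorem with_replacement_distinct_joint_distribution_general
    (n m k : ℕ) (x j : Fin m → ℕ) (c : Fin n → Fin m)
    (hx : ∀ i, (Finset.univ.filter (fun b : Fin n => c b = i)).card = x i) :
    (Nat.card {f : Fin k → Fin n // ∀ i : Fin m,
        ((Finset.image f Finset.univ).filter (fun b : Fin n => c b = i)).card = j i} : ℚ)
      / (n ^ k : ℚ)
    = (1 / (n ^ k : ℚ)) * (∏ i, (Nat.choose (x i) (j i) : ℚ)) * (Sur k (∑ i, j i) : ℚ) := by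
  have count : Nat.card {f : Fin k → Fin n // ∀ i : Fin m,
      #{b ∈ univ.image f | c b = i} = j i} = (∏ i, (x i).choose (j i)) * Sur k (∑ i, j i) := by
    rw [card_pred_image_univ fun S => ∀ i, #{b ∈ S | c b = i} = j i, Fintype.card_fin,
      sum_congr rfl fun S hS => by rw [card_eq_sum_of_card_fiber_eq c (mem_filter.mp hS).2],
      sum_const, smul_eq_mul]
    congr 1
    -- here `∀ i : Fin m` is decided by `Nat.decidableForallFin`, not by the generic instance
    convert card_finset_with_fiber_card_eq c j using 3
    exact (hx _).symm
  rw [count]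
  push_cast
  ring

/-- Sampling `k` balls with replacement from an urn of `n` balls with colour map `c`
(colour `i` having `x i` balls): the probability that exactly `j i` distinct balls of
colour `i` have been seen equals `(1/n^k) · ∏ binom(x i, j i) · Sur(k, ∑ j i)`. -/
theorem with_replacement_distinct_joint_distribution
    (n m k : ℕ) (x j : Fin m → ℕ) (c : Fin n → Fin m)
    (hx : ∀ i, (Finset.univ.filter (fun b : Fin n => c b = i)).card = x i)
    (hn : ∑ i, x i = n) :
    (Nat.card {f : Fin k → Fin n // ∀ i : Fin m,
        ((Finset.image f Finset.univ).filter (fun b : Fin n => c b = i)).card = j i} : ℚ)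
      / (n ^ k : ℚ)
    = (1 / (n ^ k : ℚ)) * (∏ i, (Nat.choose (x i) (j i) : ℚ)) * (Sur k (∑ i, j i) : ℚ) :=
  with_replacement_distinct_joint_distribution_general n m k x j c hx
end

section
/- For drawing without replacement from configuration (x_1,...,x_m) with n = sum x_i, the probability that the first 2-collision time exceeds k equals (k!(n-k)!/n!) · Sym_k(x_1,...,x_m), where Sym_k is the k-th elementary symmetric polynomial. -/
/-!
No collision occurs among the first `k` draws of an ordering `σ` exactly when the colour map,
restricted to the first `k` positions, is injective. Count such `σ` in three layers: `σ` is
determined by the balls `f` drawn first, which have pairwise distinct colours, together with an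
extension of `f` to a permutation, in `(n - k)!` ways; the sequences `f` lying over a given
injective colour sequence `g` number `∏ₜ x (g t)`; and grouping the injections `g` by their
image, every `k`-set of colours is the image of exactly `k!` of them, leaving `k! · Sym_k(x)`.
-/

open Finset

noncomputable def symQ (m k : ℕ) (x : Fin m → ℕ) : ℚ :=
  ∑ s ∈ Finset.univ.powersetCard k, ∏ i ∈ s, (x i : ℚ)

open Function Equiv
open scoped Nat

theorem Nat.card_eq_sum_card_fiber {A B : Type*} [Finite A] [Fintype B] (p : A → B) :
    Nat.card A = ∑ b, Nat.card {a // p a = b} := by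
  rw [← Nat.card_congr (Equiv.sigmaFiberEquiv p), Nat.card_sigma]

theorem Function.Embedding.card_map_univ_eq_factorial {ι β : Type*} [Fintype ι] [Fintype β]
    (s : Finset β) (hs : #s = Fintype.card ι) :
    Nat.card {g : ι ↪ β // univ.map g = s} = (Fintype.card ι)! := by
  classical
  have map_eq_iff (g : ι ↪ β) : univ.map g = s ↔ ∀ t, g t ∈ s := by
    refine ⟨fun h t => h ▸ mem_map_of_mem g (mem_univ t), fun h => ?_⟩
    refine eq_of_subset_of_card_le (fun i hi => ?_) (by rw [card_map, card_univ, hs])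
    obtain ⟨t, -, rfl⟩ := mem_map.mp hi
    exact h t
  rw [Nat.card_congr ((Equiv.subtypeEquivRight map_eq_iff).trans (Equiv.codRestrict ι _)),
    Nat.card_eq_fintype_card, Fintype.card_embedding_eq]
  simp only [Finset.coe_sort_coe, Fintype.card_coe, hs, Nat.descFactorial_self]

theorem Finset.sum_embedding_prod_eq_factorial_mul_esymm {ι β R : Type*} [Fintype ι]
    [DecidableEq ι] [Fintype β] [DecidableEq β] [CommSemiring R] (w : β → R) :
    ∑ g : ι ↪ β, ∏ t, w (g t) =
      (Fintype.card ι)! * ∑ s ∈ powersetCard (Fintype.card ι) univ, ∏ i ∈ s, w i := by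
  have maps_to (g : ι ↪ β) (_ : g ∈ univ) : univ.map g ∈ powersetCard (Fintype.card ι) univ := by
    simp
  calc ∑ g : ι ↪ β, ∏ t, w (g t)
      = ∑ g : ι ↪ β, ∏ i ∈ univ.map g, w i := by simp only [prod_map]
    _ = ∑ s ∈ powersetCard (Fintype.card ι) univ, ∑ g with univ.map g = s, ∏ i ∈ univ.map g, w i :=
        (sum_fiberwise_of_maps_to maps_to _).symm
    _ = ∑ s ∈ powersetCard (Fintype.card ι) univ, (Fintype.card ι)! * ∏ i ∈ s, w i := by
        refine sum_congr rfl fun s hs => ?_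
        rw [sum_congr rfl fun g hg => by rw [(mem_filter.mp hg).2], sum_const, nsmul_eq_mul,
          ← Fintype.card_subtype, ← Nat.card_eq_fintype_card,
          Embedding.card_map_univ_eq_factorial s (mem_powersetCard_univ.mp hs)]
    _ = _ := (mul_sum _ _ _).symm

theorem card_injective_comp_eq_sum_embedding {ι α β : Type*} [Fintype ι] [DecidableEq ι]
    [Finite α] [Fintype β] [DecidableEq β] (c : α → β) :
    Nat.card {f : ι → α // Injective (c ∘ f)} = ∑ g : ι ↪ β, ∏ t, Nat.card {a // c a = g t} := by
  rw [Nat.card_eq_sum_card_fiber fun f : {f : ι → α // Injective (c ∘ f)} =>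
    (⟨c ∘ f.1, f.2⟩ : ι ↪ β)]
  refine sum_congr rfl fun g _ => ?_
  let fiber_equiv : {f : {f : ι → α // Injective (c ∘ f)} // (⟨c ∘ f.1, f.2⟩ : ι ↪ β) = g} ≃
      {f : ι → α // ∀ t, c (f t) = g t} :=
    { toFun f := ⟨f.1.1, fun t => DFunLike.congr_fun f.2 t⟩
      invFun f :=
        ⟨⟨f.1, by rw [show c ∘ f.1 = g from funext f.2]; exact g.injective⟩, Embedding.ext f.2⟩
      left_inv _ := rfl
      right_inv _ := rfl }
  rw [Nat.card_congr (fiber_equiv.trans (Equiv.subtypePiEquivPi (p := fun t a => c a = g t))),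
    Nat.card_pi]

theorem Equiv.Perm.card_extending_embedding {ι α : Type*} [Finite α] (e f : ι ↪ α) :
    Nat.card {σ : Perm α // ∀ t, σ (e t) = f t} = (Nat.card α - Nat.card ι)! := by
  classical
  let e₀ : Set.range e ≃ Set.range f :=
    (Equiv.ofInjective e e.injective).symm.trans (Equiv.ofInjective f f.injective)
  have card_compl (g : ι ↪ α) : Nat.card ↑(Set.range g)ᶜ = Nat.card α - Nat.card ι := by
    rw [Nat.card_coe_set_eq, Set.ncard_compl, ← Nat.card_coe_set_eq,
      Nat.card_range_of_injective g.injective]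
  obtain ⟨ρ⟩ := Finite.card_eq.mp ((card_compl e).trans (card_compl f).symm)
  calc Nat.card {σ : Perm α // ∀ t, σ (e t) = f t}
      = Nat.card {σ : Perm α // ∀ x : Set.range e, σ x = e₀ x} := by
        refine Nat.card_congr (Equiv.subtypeEquivRight fun σ => ?_)
        rw [Set.forall_subtype_range_iff]
        simp [e₀, Equiv.ofInjective_symm_apply]
    _ = Nat.card (↑(Set.range e)ᶜ ≃ ↑(Set.range f)ᶜ) := Nat.card_congr (Equiv.Set.compl e₀)
    _ = (Nat.card α - Nat.card ι)! := by
      rw [← card_compl e, ← Nat.card_perm]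
      exact Nat.card_congr (Equiv.equivCongr (.refl _) ρ.symm)

theorem Equiv.Perm.card_injective_comp_comp {ι α β : Type*} [Finite α] (c : α → β)
    (e : ι ↪ α) :
    Nat.card {σ : Perm α // Injective (c ∘ σ ∘ e)} =
      Nat.card {f : ι → α // Injective (c ∘ f)} * (Nat.card α - Nat.card ι)! := by
  have : Finite ι := Finite.of_injective e e.injective
  have := Fintype.ofFinite {f : ι → α // Injective (c ∘ f)}
  rw [Nat.card_eq_sum_card_fiber fun σ : {σ : Perm α // Injective (c ∘ σ ∘ e)} =>
    (⟨σ.1 ∘ e, σ.2⟩ : {f : ι → α // Injective (c ∘ f)})]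
  have card_fiber (f : {f : ι → α // Injective (c ∘ f)}) :
      Nat.card {σ : {σ : Perm α // Injective (c ∘ σ ∘ e)} //
        (⟨σ.1 ∘ e, σ.2⟩ : {f : ι → α // Injective (c ∘ f)}) = f} = (Nat.card α - Nat.card ι)! := by
    let fiber_equiv : {σ : {σ : Perm α // Injective (c ∘ σ ∘ e)} //
        (⟨σ.1 ∘ e, σ.2⟩ : {f : ι → α // Injective (c ∘ f)}) = f} ≃
        {σ : Perm α // ∀ t, σ (e t) = (⟨f.1, f.2.of_comp⟩ : ι ↪ α) t} :=
      { toFun σ := ⟨σ.1.1, fun t => congr_fun (congr_arg Subtype.val σ.2) t⟩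
        invFun σ := ⟨⟨σ.1, by rw [show σ.1 ∘ e = f.1 from funext σ.2]; exact f.2⟩,
          Subtype.ext (funext σ.2)⟩
        left_inv _ := rfl
        right_inv _ := rfl }
    rw [Nat.card_congr fiber_equiv, Perm.card_extending_embedding]
  simp only [card_fiber, sum_const, card_univ, smul_eq_mul, Nat.card_eq_fintype_card]

theorem Equiv.Perm.card_injective_comp_comp_eq_factorial_mul_esymm {ι α β : Type*} [Fintype ι]
    [DecidableEq ι] [Finite α] [Fintype β] [DecidableEq β] (c : α → β) (e : ι ↪ α) :
    Nat.card {σ : Perm α // Injective (c ∘ σ ∘ e)} =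
      (Nat.card α - Fintype.card ι)! * (Fintype.card ι)! *
        ∑ s ∈ powersetCard (Fintype.card ι) univ, ∏ i ∈ s, Nat.card {a // c a = i} := by
  rw [card_injective_comp_comp, card_injective_comp_eq_sum_embedding,
    sum_embedding_prod_eq_factorial_mul_esymm fun i => Nat.card {a // c a = i}, Nat.cast_id,
    Nat.card_eq_fintype_card (α := ι)]
  ring

theorem Fin.forall_card_filter_lt_le_one_iff {β : Type*} [DecidableEq β] {n k : ℕ} (hk : k ≤ n)
    (h : Fin n → β) :
    (∀ b, #{t : Fin n | t.val < k ∧ h t = b} ≤ 1) ↔ Injective (h ∘ Fin.castLEEmb hk) := by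
  constructor
  · intro hcard t u htu
    refine (Fin.castLEEmb hk).injective (card_le_one.mp (hcard (h (Fin.castLEEmb hk u))) _ ?_ _ ?_)
    · simpa using htu
    · simp
  · intro hinj b
    refine card_le_one.mpr fun t ht u hu => ?_
    simp only [mem_filter, mem_univ, true_and] at ht hu
    simpa [Fin.ext_iff] using @hinj ⟨t, ht.1⟩ ⟨u, hu.1⟩ (by simp [ht.2, hu.2])

theorem collision_time_without_replacement_esymm_general
    (n m k : ℕ) (x : Fin m → ℕ) (c : Fin n → Fin m)
    (hx : ∀ i, (Finset.univ.filter (fun b : Fin n => c b = i)).card = x i)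
    (hk : k ≤ n) :
    (Nat.card {σ : Equiv.Perm (Fin n) // ∀ i : Fin m,
        (Finset.univ.filter (fun t : Fin n => t.val < k ∧ c (σ t) = i)).card ≤ 1} : ℚ)
      / (Nat.factorial n : ℚ)
    = ((Nat.factorial k : ℚ) * (Nat.factorial (n - k) : ℚ) / (Nat.factorial n : ℚ)) *
        symQ m k x := by
  have collision_free_iff (σ : Perm (Fin n)) :
      (∀ i, #{t : Fin n | t.val < k ∧ c (σ t) = i} ≤ 1) ↔ Injective (c ∘ σ ∘ Fin.castLEEmb hk) :=
    Fin.forall_card_filter_lt_le_one_iff hk (c ∘ σ)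
  rw [Nat.card_congr (Equiv.subtypeEquivRight collision_free_iff),
    Perm.card_injective_comp_comp_eq_factorial_mul_esymm c (Fin.castLEEmb hk)]
  simp only [Nat.card_eq_fintype_card, Fintype.card_fin, Fintype.card_subtype, hx, symQ]
  push_cast
  field_simp

/-- Drawing without replacement from configuration `(x_1,…,x_m)`:
`P(K_2^{(1)} > k) = (k!(n-k)!/n!) · Sym_k(x_1,…,x_m)`. -/
theorem collision_time_without_replacement_esymm
    (n m k : ℕ) (x : Fin m → ℕ) (c : Fin n → Fin m)
    (hx : ∀ i, (Finset.univ.filter (fun b : Fin n => c b = i)).card = x i)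
    (hn : ∑ i, x i = n) (hk : k ≤ n) :
    (Nat.card {σ : Equiv.Perm (Fin n) // ∀ i : Fin m,
        (Finset.univ.filter (fun t : Fin n => t.val < k ∧ c (σ t) = i)).card ≤ 1} : ℚ)
      / (Nat.factorial n : ℚ)
    = ((Nat.factorial k : ℚ) * (Nat.factorial (n - k) : ℚ) / (Nat.factorial n : ℚ)) *
        symQ m k x :=
  collision_time_without_replacement_esymm_general n m k x c hx hk
end

section
/- For drawing with replacement from configuration (x_1,...,x_m), n = sum x_i, the probability that the first 2-repetition time exceeds k equals (k!/n^k) · Sym_k(x_1,...,x_m). -/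
open Finset

/-!
A sequence of draws has no repeated colour exactly when its colour sequence is injective. Grouping
draw sequences by their colour sequence `g`, there are `∏ t, x (g t)` of them over each `g`, and
grouping injective colour sequences by their image, every `k`-set of colours is the image of `k!`
of them; this gives `k! · e_k(x)` sequences without repetition.
-/

open Function

section Counting

variable {α β γ : Type*} [Fintype α] [DecidableEq γ]

theorem forall_card_filter_eq_le_one_iff_injective {f : α → γ} :
    (∀ i, #{a | f a = i} ≤ 1) ↔ Injective f := by
  simp only [card_le_one, mem_filter, mem_univ, true_and]
  exact ⟨fun h a b hab => h (f b) a hab b rfl, fun h i a ha b hb => h (ha.trans hb.symm)⟩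

variable [DecidableEq α] [Fintype β]

theorem card_filter_comp_eq (c : β → γ) (g : α → γ) :
    #{f : α → β | c ∘ f = g} = ∏ a, #{b | c b = g a} := by
  rw [← Fintype.card_piFinset]
  congr 1
  ext f
  simp [funext_iff]

theorem card_filter_injective_comp [Fintype γ] (c : β → γ) :
    #{f : α → β | Injective (c ∘ f)} = ∑ g : α → γ with Injective g, ∏ a, #{b | c b = g a} := by
  rw [card_eq_sum_card_fiberwise (f := (c ∘ ·)) (t := {g | Injective g})
    fun f hf => by simpa using hf]
  refine sum_congr rfl fun g hg => ?_
  rw [← card_filter_comp_eq]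
  congr 1
  ext f
  simp only [mem_filter, mem_univ, true_and, and_iff_right_iff_imp]
  rintro rfl
  simpa using hg

end Counting

section Embeddings

variable {α γ : Type*}

def subtypeInjectiveMemEquivEmbedding (s : Finset γ) :
    {g : α → γ // Injective g ∧ ∀ a, g a ∈ s} ≃ (α ↪ s) where
  toFun g := ⟨fun a => ⟨g.1 a, g.2.2 a⟩, fun _ _ h => g.2.1 (congrArg Subtype.val h)⟩
  invFun e := ⟨fun a => e a, Subtype.val_injective.comp e.injective, fun a => (e a).2⟩
  left_inv _ := rfl
  right_inv _ := rfl

variable [Fintype α] [DecidableEq α] [Fintype γ] [DecidableEq γ]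

theorem card_filter_injective_forall_mem (s : Finset γ) :
    #{g : α → γ | Injective g ∧ ∀ a, g a ∈ s} = (#s).descFactorial (Fintype.card α) := by
  rw [← Fintype.card_subtype, Fintype.card_congr (subtypeInjectiveMemEquivEmbedding s),
    Fintype.card_embedding_eq, Fintype.card_coe]

theorem card_filter_injective_image_eq {s : Finset γ} (hs : #s = Fintype.card α) :
    #{g : α → γ | Injective g ∧ univ.image g = s} = (Fintype.card α).factorial := by
  rw [← Nat.descFactorial_self]
  nth_rw 1 [← hs]
  rw [← card_filter_injective_forall_mem]
  congr 1
  ext g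
  simp only [mem_filter, mem_univ, true_and, and_congr_right_iff]
  intro hg
  refine ⟨fun h a => h ▸ mem_image_of_mem g (mem_univ a), fun h => ?_⟩
  refine eq_of_subset_of_card_le (image_subset_iff.mpr fun a _ => h a) ?_
  rw [card_image_of_injective _ hg, card_univ, hs]

theorem sum_injective_prod_eq_factorial_mul {R : Type*} [CommSemiring R] (w : γ → R) :
    ∑ g : α → γ with Injective g, ∏ a, w (g a)
      = (Fintype.card α).factorial * ∑ s ∈ univ.powersetCard (Fintype.card α), ∏ i ∈ s, w i := by
  have hmaps : ∀ g ∈ ({g : α → γ | Injective g} : Finset _),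
      univ.image g ∈ univ.powersetCard (Fintype.card α) := by
    intro g hg
    rw [mem_filter] at hg
    simp [mem_powersetCard, card_image_of_injective _ hg.2]
  rw [← sum_fiberwise_of_maps_to hmaps, mul_sum]
  refine sum_congr rfl fun s hs => ?_
  have hprod : ∀ g ∈ ({g ∈ ({g : α → γ | Injective g} : Finset _) | univ.image g = s}),
      ∏ a, w (g a) = ∏ i ∈ s, w i := by
    intro g hg
    simp only [mem_filter, mem_univ, true_and] at hg
    rw [← hg.2, prod_image fun a _ b _ h => hg.1 h]
  rw [sum_congr rfl hprod, sum_const, filter_filter, nsmul_eq_mul,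
    card_filter_injective_image_eq (mem_powersetCard.mp hs).2]

end Embeddings

theorem repetition_time_with_replacement_esymm_general
    (n m k : ℕ) (x : Fin m → ℕ) (c : Fin n → Fin m)
    (hx : ∀ i, (Finset.univ.filter (fun b : Fin n => c b = i)).card = x i) :
    (Nat.card {f : Fin k → Fin n // ∀ i : Fin m,
        (Finset.univ.filter (fun t : Fin k => c (f t) = i)).card ≤ 1} : ℚ)
      / (n ^ k : ℚ)
    = ((Nat.factorial k : ℚ) / (n ^ k : ℚ)) * symQ m k x := by
  have hcount : Nat.card {f : Fin k → Fin n // ∀ i : Fin m,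
      (Finset.univ.filter (fun t : Fin k => c (f t) = i)).card ≤ 1}
        = ∑ g : Fin k → Fin m with Injective g, ∏ t, x (g t) := by
    have hinj (f : Fin k → Fin n) : (∀ i, #{t | c (f t) = i} ≤ 1) ↔ Injective (c ∘ f) :=
      forall_card_filter_eq_le_one_iff_injective
    simp_rw [hinj, Nat.card_eq_fintype_card, Fintype.card_subtype, card_filter_injective_comp, hx]
  rw [hcount, Nat.cast_sum, div_mul_eq_mul_div, symQ]
  push_cast
  rw [sum_injective_prod_eq_factorial_mul (fun i => (x i : ℚ)), Fintype.card_fin]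

/-- Drawing with replacement from configuration `(x_1,…,x_m)`:
`P(R_2 > k) = (k!/n^k) · Sym_k(x_1,…,x_m)`. -/
theorem repetition_time_with_replacement_esymm
    (n m k : ℕ) (x : Fin m → ℕ) (c : Fin n → Fin m)
    (hx : ∀ i, (Finset.univ.filter (fun b : Fin n => c b = i)).card = x i)
    (hn : ∑ i, x i = n) :
    (Nat.card {f : Fin k → Fin n // ∀ i : Fin m,
        (Finset.univ.filter (fun t : Fin k => c (f t) = i)).card ≤ 1} : ℚ)
      / (n ^ k : ℚ)
    = ((Nat.factorial k : ℚ) / (n ^ k : ℚ)) * symQ m k x :=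
  repetition_time_with_replacement_esymm_general n m k x c hx
end

section
/- Let x, y be positive reals with x < y, let r ≥ 2, and let q_r(t) := sum_{i=0}^{r-1} t^i/i!. Then for every k, the coefficient of t^k in q_r(x t) q_r(y t) is at most the coefficient of t^k in q_r(((x+y)/2) t)^2. -/
/-!
Write `m = (x + y) / 2` and move the two parameters apart, `s = m - d`, `t = m + d`. Since
`∂ₐ q_{n+1}(aT) = T q_n(aT)` and `q_{n+1}(aT) = q_n(aT) + (aT)^n / n!`, the derivative in `d` of
`q_{n+1}(sT) q_{n+1}(tT)` is `T^{n+1}/n! · (s^n q_n(tT) - t^n q_n(sT))`, and its coefficient of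
`T^{n+1+j}` (`j < n`) is `(s^n t^j - t^n s^j) / (n! j!) ≤ 0` for `0 ≤ s ≤ t`. So every
coefficient decreases as `d` runs from `0` to `(y - x) / 2`.
-/

open Finset Polynomial

/-- `q_r(a·t) = ∑_{i=0}^{r-1} a^i t^i / i!` as a polynomial over `ℝ`. -/
noncomputable def qrPoly (r : ℕ) (a : ℝ) : Polynomial ℝ :=
  ∑ i ∈ Finset.range r, Polynomial.C (a ^ i / (Nat.factorial i : ℝ)) * Polynomial.X ^ i

open scoped Nat

theorem pow_mul_pow_le_pow_mul_pow {R : Type*} [CommSemiring R] [PartialOrder R]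
    [IsOrderedRing R] {s t : R} (hs : 0 ≤ s) (hst : s ≤ t) {j n : ℕ} (hjn : j ≤ n) :
    s ^ n * t ^ j ≤ t ^ n * s ^ j := by
  obtain ⟨c, rfl⟩ := Nat.exists_eq_add_of_le hjn
  have hst_pow : s ^ c ≤ t ^ c := pow_le_pow_left₀ hs hst c
  have hst_nonneg : 0 ≤ s ^ j * t ^ j :=
    mul_nonneg (pow_nonneg hs j) (pow_nonneg (hs.trans hst) j)
  calc s ^ (j + c) * t ^ j = (s ^ j * t ^ j) * s ^ c := by ring
    _ ≤ (s ^ j * t ^ j) * t ^ c := mul_le_mul_of_nonneg_left hst_pow hst_nonneg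
    _ = t ^ (j + c) * s ^ j := by ring

theorem Polynomial.hasDerivAt_coeff_mul {𝕜 : Type*} [NontriviallyNormedField 𝕜]
    {A B : 𝕜 → 𝕜[X]} {A' B' : 𝕜[X]} {x : 𝕜}
    (hA : ∀ i, HasDerivAt (fun d => (A d).coeff i) (A'.coeff i) x)
    (hB : ∀ i, HasDerivAt (fun d => (B d).coeff i) (B'.coeff i) x) (k : ℕ) :
    HasDerivAt (fun d => (A d * B d).coeff k) ((A' * B x + A x * B').coeff k) x := by
  simp only [coeff_add, coeff_mul, ← sum_add_distrib]
  exact HasDerivAt.fun_sum fun p _ => (hA p.1).mul (hB p.2)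

theorem qrPoly_coeff (r : ℕ) (a : ℝ) (j : ℕ) :
    (qrPoly r a).coeff j = if j < r then a ^ j / j ! else 0 := by
  simp [qrPoly, coeff_C_mul, coeff_X_pow]

theorem qrPoly_succ (n : ℕ) (a : ℝ) :
    qrPoly (n + 1) a = qrPoly n a + C (a ^ n / n !) * X ^ n :=
  sum_range_succ _ _

theorem hasDerivAt_qrPoly_coeff (n : ℕ) (a : ℝ) (i : ℕ) :
    HasDerivAt (fun b => (qrPoly (n + 1) b).coeff i) ((X * qrPoly n a).coeff i) a := by
  cases i with
  | zero => simpa [qrPoly_coeff] using hasDerivAt_const a (1 : ℝ)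
  | succ i =>
    simp only [qrPoly_coeff, coeff_X_mul, add_lt_add_iff_right]
    split_ifs
    · refine ((hasDerivAt_pow (i + 1) a).div_const ((i + 1)! : ℝ)).congr_deriv ?_
      rw [Nat.factorial_succ]
      push_cast
      field_simp
    · exact hasDerivAt_const a 0

theorem coeff_qrPoly_balance_deriv_nonpos {s t : ℝ} (hs : 0 ≤ s) (hst : s ≤ t) (n k : ℕ) :
    (qrPoly (n + 1) s * (X * qrPoly n t) - X * qrPoly n s * qrPoly (n + 1) t).coeff k ≤ 0 := by
  have hD : qrPoly (n + 1) s * (X * qrPoly n t) - X * qrPoly n s * qrPoly (n + 1) t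
      = X ^ (n + 1) * (C (s ^ n / n !) * qrPoly n t - C (t ^ n / n !) * qrPoly n s) := by
    rw [qrPoly_succ, qrPoly_succ]
    ring
  rw [hD, coeff_X_pow_mul', coeff_sub, coeff_C_mul, coeff_C_mul, qrPoly_coeff, qrPoly_coeff]
  split_ifs with hk hj
  · rw [sub_nonpos, div_mul_div_comm, div_mul_div_comm, mul_comm (n ! : ℝ)]
    exact div_le_div_of_nonneg_right (pow_mul_pow_le_pow_mul_pow hs hst hj.le) (by positivity)
  all_goals simp

theorem antitoneOn_coeff_qrPoly_mul (r k : ℕ) (m : ℝ) :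
    AntitoneOn (fun d => (qrPoly r (m - d) * qrPoly r (m + d)).coeff k) (Set.Icc 0 m) := by
  cases r with
  | zero => simp [qrPoly, antitoneOn_const]
  | succ n =>
    have hderiv : ∀ d,
        HasDerivAt (fun d => (qrPoly (n + 1) (m - d) * qrPoly (n + 1) (m + d)).coeff k)
        ((qrPoly (n + 1) (m - d) * (X * qrPoly n (m + d))
          - X * qrPoly n (m - d) * qrPoly (n + 1) (m + d)).coeff k) d := by
      intro d
      have hs : ∀ i, HasDerivAt (fun d => (qrPoly (n + 1) (m - d)).coeff i)
          ((-(X * qrPoly n (m - d))).coeff i) d := fun i => by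
        simpa [Function.comp_def] using
          (hasDerivAt_qrPoly_coeff n (m - d) i).comp d ((hasDerivAt_id d).const_sub m)
      have ht : ∀ i, HasDerivAt (fun d => (qrPoly (n + 1) (m + d)).coeff i)
          ((X * qrPoly n (m + d)).coeff i) d := fun i => by
        simpa [Function.comp_def] using
          (hasDerivAt_qrPoly_coeff n (m + d) i).comp d ((hasDerivAt_id d).const_add m)
      exact (Polynomial.hasDerivAt_coeff_mul hs ht k).congr_deriv (by congr 1; ring)
    apply antitoneOn_of_deriv_nonpos (convex_Icc 0 m)
      (fun d _ => (hderiv d).continuousAt.continuousWithinAt)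
      (fun d _ => (hderiv d).differentiableAt.differentiableWithinAt)
    intro d hd
    rw [interior_Icc] at hd
    rw [(hderiv d).deriv]
    exact coeff_qrPoly_balance_deriv_nonpos (by linarith [hd.2]) (by linarith [hd.1]) _ _

theorem qr_balance_coeff_le_general (r : ℕ) (x y : ℝ) (hx : 0 < x) (hxy : x < y)
    (k : ℕ) :
    (qrPoly r x * qrPoly r y).coeff k
      ≤ (qrPoly r ((x + y) / 2) * qrPoly r ((x + y) / 2)).coeff k := by
  have h := antitoneOn_coeff_qrPoly_mul r k ((x + y) / 2) ⟨le_rfl, by linarith⟩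
    ⟨by linarith, by linarith⟩ (show (0 : ℝ) ≤ (y - x) / 2 by linarith)
  have hx' : (x + y) / 2 - (y - x) / 2 = x := by ring
  have hy' : (x + y) / 2 + (y - x) / 2 = y := by ring
  simpa only [hx', hy', sub_zero, add_zero] using h

/-- Balancing two preimage sizes: for `0 < x < y` and `r ≥ 2`, every coefficient of
`q_r(xt)q_r(yt)` is at most the corresponding coefficient of `q_r(((x+y)/2)t)^2`. -/
theorem qr_balance_coeff_le (r : ℕ) (hr : 2 ≤ r) (x y : ℝ) (hx : 0 < x) (hxy : x < y)
    (k : ℕ) :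
    (qrPoly r x * qrPoly r y).coeff k
      ≤ (qrPoly r ((x + y) / 2) * qrPoly r ((x + y) / 2)).coeff k :=
  qr_balance_coeff_le_general r x y hx hxy k
end

section
/- For every k ∈ ℕ and r ≥ 2, the r-collision time for drawing with replacement stochastically dominates the r-collision time for drawing without replacement: P(K_r^{(2)} > k) ≥ P(K_r^{(1)} > k), for any fixed configuration (x_1,...,x_m). -/
/-!
In both experiments the set of distinct balls seen in the first `k` draws is invariant in law
under relabelling the balls, so conditionally on its size `d` it is a uniform `d`-subset. Without
replacement its size is always `K = min k n`; with replacement it is at most `K`. No colour has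
been seen `r` times iff this set lies in the lower set `𝒢` of sets with at most `r - 1` balls of
each colour, and by the local LYM inequality the proportion `#(𝒢 # d) / n.choose d` of such
`d`-sets is antitone in `d`. The with-replacement probability, an average of these proportions
over `d ≤ K`, is therefore at least the proportion at `K`, the without-replacement probability.
-/

open Finset
open scoped Pointwise FinsetFamily

variable {α : Type*}

section LowerSet

variable [DecidableEq α] {𝒢 : Finset (Finset α)}

theorem IsLowerSet.shadow_slice_succ_subset (h𝒢 : IsLowerSet (𝒢 : Set (Finset α)))
    (d : ℕ) : ∂ (𝒢 # (d + 1)) ⊆ 𝒢 # d := by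
  intro s hs
  obtain ⟨t, ht, a, ha, rfl⟩ := mem_shadow_iff.1 hs
  rw [mem_slice] at ht ⊢
  exact ⟨h𝒢 (erase_subset a t) ht.1, by rw [card_erase_of_mem ha, ht.2, Nat.add_sub_cancel]⟩

theorem IsLowerSet.antitone_card_slice_div_choose [Fintype α] {𝕜 : Type*} [Semifield 𝕜]
    [LinearOrder 𝕜] [IsStrictOrderedRing 𝕜] (h𝒢 : IsLowerSet (𝒢 : Set (Finset α))) :
    Antitone fun d => (#(𝒢 # d) : 𝕜) / (Fintype.card α).choose d :=
  antitone_nat_of_succ_le fun d =>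
    (local_lubell_yamamoto_meshalkin_inequality_div d.succ_ne_zero sized_slice).trans <|
      div_le_div_of_nonneg_right (by exact_mod_cast card_le_card (h𝒢.shadow_slice_succ_subset d))
        (Nat.cast_nonneg _)

end LowerSet

section Equivariant

variable [DecidableEq α] {X : Type*} [Fintype X]

theorem card_filter_mem_eq_sum_card_fiberwise (F : X → Finset α) (𝒜 : Finset (Finset α)) :
    #{x | F x ∈ 𝒜} = ∑ S ∈ 𝒜, #{x | F x = S} := by
  rw [card_eq_sum_card_fiberwise (f := F) (t := 𝒜) (fun x hx => by simpa using hx)]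
  refine sum_congr rfl fun S hS => congrArg card ?_
  ext x
  simp +contextual [hS]

variable [MulAction (Equiv.Perm α) X] (F : X →[Equiv.Perm α] Finset α)

theorem card_filter_eq_eq_of_card_eq {S T : Finset α} (hST : #S = #T) :
    #{x | F x = S} = #{x | F x = T} := by
  obtain ⟨π, hπ⟩ := (Set.powersetCard.isPretransitive (α := α) (n := #T)).exists_smul_eq
    ⟨S, hST⟩ ⟨T, rfl⟩
  replace hπ : π • S = T := congrArg Subtype.val hπ
  refine card_nbij' (π • ·) (π⁻¹ • ·) (fun x hx => ?_) (fun x hx => ?_)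
    (fun x _ => inv_smul_smul π x) (fun x _ => smul_inv_smul π x)
  · simp only [coe_filter, mem_univ, true_and, Set.mem_ofPred_eq] at hx ⊢
    rw [map_smul, hx, hπ]
  · simp only [coe_filter, mem_univ, true_and, Set.mem_ofPred_eq] at hx ⊢
    rw [map_smul, hx, inv_smul_eq_iff, hπ]

variable [Fintype α]

theorem card_filter_mem_mul_choose {𝒜 : Finset (Finset α)} {d : ℕ}
    (h𝒜 : (𝒜 : Set (Finset α)).Sized d) :
    #{x | F x ∈ 𝒜} * (Fintype.card α).choose d = #𝒜 * #{x | #(F x) = d} := by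
  have hlevel : #{x | #(F x) = d} = ∑ T ∈ powersetCard d univ, #{x | F x = T} := by
    rw [← card_filter_mem_eq_sum_card_fiberwise]
    simp
  rw [card_filter_mem_eq_sum_card_fiberwise, hlevel, sum_mul, ← smul_eq_mul, ← sum_const]
  refine sum_congr rfl fun S hS => ?_
  have hfiber : ∀ T ∈ powersetCard d univ, #{x | F x = T} = #{x | F x = S} := fun T hT =>
    card_filter_eq_eq_of_card_eq F (by rw [(mem_powersetCard.1 hT).2, h𝒜 hS])
  rw [sum_congr rfl hfiber, sum_const, card_powersetCard, card_univ, smul_eq_mul, mul_comm]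

theorem card_slice_div_choose_mul_card_le {𝕜 : Type*} [Semifield 𝕜] [LinearOrder 𝕜]
    [IsStrictOrderedRing 𝕜] {𝒢 : Finset (Finset α)} (h𝒢 : IsLowerSet (𝒢 : Set (Finset α)))
    {K : ℕ} (hK : ∀ x, #(F x) ≤ K) :
    (#(𝒢 # K) : 𝕜) / (Fintype.card α).choose K * Fintype.card X ≤ #{x | F x ∈ 𝒢} := by
  have hmaps : ∀ s : Finset X, Set.MapsTo (fun x => #(F x)) s (range (K + 1)) :=
    fun s x _ => mem_range.2 (Nat.lt_succ_of_le (hK x))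
  have hX := card_eq_sum_card_fiberwise (hmaps univ)
  have hgood := card_eq_sum_card_fiberwise (hmaps {x | F x ∈ 𝒢})
  simp only [filter_filter, ← mem_slice] at hgood
  rw [← card_univ (α := X), hX, hgood]
  push_cast
  rw [mul_sum]
  refine sum_le_sum fun d hd => ?_
  calc (#(𝒢 # K) : 𝕜) / (Fintype.card α).choose K * #{x | #(F x) = d}
      ≤ (#(𝒢 # d) : 𝕜) / (Fintype.card α).choose d * #{x | #(F x) = d} :=
        mul_le_mul_of_nonneg_right
          (h𝒢.antitone_card_slice_div_choose (Nat.lt_succ_iff.1 (mem_range.1 hd)))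
          (Nat.cast_nonneg _)
    _ ≤ #{x | F x ∈ 𝒢 # d} := by
        rw [div_mul_eq_mul_div]
        refine div_le_of_le_mul₀ (Nat.cast_nonneg _) (Nat.cast_nonneg _) ?_
        exact_mod_cast (card_filter_mem_mul_choose F sized_slice).ge

end Equivariant

section Relabelling

variable [DecidableEq α] [Fintype α]

@[simps]
def smulFinsetMulActionHom (D : Finset α) : Equiv.Perm α →[Equiv.Perm α] Finset α where
  toFun σ := σ • D
  map_smul' π σ := mul_smul π σ D

@[simps]
def imageUnivMulActionHom (β : Type*) [Fintype β] : (β → α) →[Equiv.Perm α] Finset α where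
  toFun f := image f univ
  map_smul' π f := by
    rw [smul_finset_def, image_image]
    rfl

theorem card_perm_smul_mem_div_factorial {𝕜 : Type*} [Field 𝕜] [CharZero 𝕜]
    (𝒢 : Finset (Finset α)) (D : Finset α) :
    (#{σ : Equiv.Perm α | σ • D ∈ 𝒢} : 𝕜) / (Fintype.card α).factorial =
      #(𝒢 # #D) / (Fintype.card α).choose #D := by
  have h := card_filter_mem_mul_choose (smulFinsetMulActionHom D) (sized_slice (𝒜 := 𝒢) (r := #D))
  simp only [smulFinsetMulActionHom_apply, mem_slice, card_smul_finset, and_true, filter_true,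
    card_univ, Fintype.card_perm] at h
  rw [div_eq_div_iff (by exact_mod_cast (Nat.factorial_pos _).ne')
    (by exact_mod_cast (Nat.choose_pos (card_le_univ D)).ne')]
  exact_mod_cast h

end Relabelling

section Colour

variable [Fintype α] {ι : Type*} [Fintype ι] [DecidableEq ι]

def colourBounded (c : α → ι) (r : ℕ) : Finset (Finset α) :=
  {S | ∀ i, #{a ∈ S | c a = i} ≤ r}

@[simp]
theorem mem_colourBounded {c : α → ι} {r : ℕ} {S : Finset α} :
    S ∈ colourBounded c r ↔ ∀ i, #{a ∈ S | c a = i} ≤ r := by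
  simp [colourBounded]

theorem isLowerSet_colourBounded (c : α → ι) (r : ℕ) :
    IsLowerSet (colourBounded c r : Set (Finset α)) := fun T S hST hT => by
  rw [mem_coe, mem_colourBounded] at hT ⊢
  exact fun i => (card_le_card (filter_subset_filter _ hST)).trans (hT i)

theorem perm_smul_mem_colourBounded_iff [DecidableEq α] {c : α → ι} {r : ℕ} (σ : Equiv.Perm α)
    (D : Finset α) :
    σ • D ∈ colourBounded c r ↔ ∀ i, #{t ∈ D | c (σ t) = i} ≤ r := by
  simp only [mem_colourBounded, smul_finset_def, filter_image, Equiv.Perm.smul_def]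
  simp only [card_image_of_injective _ σ.injective]

end Colour

theorem collision_time_with_ge_without_general
    (n m k r : ℕ) (x : Fin m → ℕ) (c : Fin n → Fin m)
    (hx : ∀ i, (Finset.univ.filter (fun b : Fin n => c b = i)).card = x i)
    (hr : 2 ≤ r) (hex : ∃ i, r ≤ x i) :
    (Nat.card {σ : Equiv.Perm (Fin n) // ∀ i : Fin m,
        (Finset.univ.filter (fun t : Fin n => t.val < k ∧ c (σ t) = i)).card ≤ r - 1} : ℚ)
      / (Nat.factorial n : ℚ)
    ≤ (Nat.card {f : Fin k → Fin n // ∀ i : Fin m,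
        ((Finset.image f Finset.univ).filter (fun b : Fin n => c b = i)).card ≤ r - 1} : ℚ)
      / (n ^ k : ℚ) := by
  obtain ⟨i, hi⟩ := hex
  have hn : 0 < n := by
    have := card_le_univ {b | c b = i}
    rw [hx, Fintype.card_fin] at this
    omega
  set D : Finset (Fin n) := {t | t.val < k}
  have hP : Nat.card {σ : Equiv.Perm (Fin n) // ∀ i, #{t | t.val < k ∧ c (σ t) = i} ≤ r - 1}
      = #{σ : Equiv.Perm (Fin n) | σ • D ∈ colourBounded c (r - 1)} := by
    simp only [Nat.card_eq_fintype_card, Fintype.card_subtype, perm_smul_mem_colourBounded_iff,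
      D, filter_filter]
  have hQ : Nat.card {f : Fin k → Fin n // ∀ i, #{b ∈ image f univ | c b = i} ≤ r - 1}
      = #{f : Fin k → Fin n | image f univ ∈ colourBounded c (r - 1)} := by
    simp only [Nat.card_eq_fintype_card, Fintype.card_subtype, mem_colourBounded]
  have hK : ∀ f : Fin k → Fin n, #(image f univ) ≤ #D := fun f => by
    rw [Fin.card_filter_val_lt]
    exact le_min ((card_le_univ _).trans_eq (Fintype.card_fin n))
      (card_image_le.trans_eq (card_fin k))
  have hdensity := card_perm_smul_mem_div_factorial (𝕜 := ℚ) (colourBounded c (r - 1)) D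
  rw [Fintype.card_fin] at hdensity
  rw [hP, hQ, hdensity, le_div_iff₀ (by positivity)]
  simpa only [imageUnivMulActionHom_apply, Fintype.card_pi, Fintype.card_fin, prod_const,
    card_univ, Nat.cast_pow] using card_slice_div_choose_mul_card_le (𝕜 := ℚ)
      (imageUnivMulActionHom (Fin k)) (isLowerSet_colourBounded c (r - 1)) hK

/-- Drawing with replacement stochastically dominates drawing without replacement for
the `r`-collision time: `P(K_r^{(2)} > k) ≥ P(K_r^{(1)} > k)` for every `k`. -/
theorem collision_time_with_ge_without
    (n m k r : ℕ) (x : Fin m → ℕ) (c : Fin n → Fin m)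
    (hx : ∀ i, (Finset.univ.filter (fun b : Fin n => c b = i)).card = x i)
    (hn : ∑ i, x i = n) (hr : 2 ≤ r) (hex : ∃ i, r ≤ x i) :
    (Nat.card {σ : Equiv.Perm (Fin n) // ∀ i : Fin m,
        (Finset.univ.filter (fun t : Fin n => t.val < k ∧ c (σ t) = i)).card ≤ r - 1} : ℚ)
      / (Nat.factorial n : ℚ)
    ≤ (Nat.card {f : Fin k → Fin n // ∀ i : Fin m,
        ((Finset.image f Finset.univ).filter (fun b : Fin n => c b = i)).card ≤ r - 1} : ℚ)
      / (n ^ k : ℚ) :=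
  collision_time_with_ge_without_general n m k r x c hx hr hex
end

section
/- For r = 2 and any configuration (x_1,...,x_m) with n = sum x_i: P(R_2 > k) = (n!/((n-k)! n^k)) · P(K_2^{(1)} > k) for all k ≤ n; consequently P(K_2^{(1)} > k) ≥ P(R_2 > k). -/
/-!
Reading the first `k` draws of a uniformly random permutation of the `n` balls gives a uniformly
random injection `Fin k → Fin n`: every injection is the restriction of exactly `(n - k)!`
permutations. A sequence of `k` draws with no two balls of the same colour is injective, so
the collision-free draws without replacement number `(n - k)!` times the collision-free draws
with replacement. The factor relating the two probabilities is `n.descFactorial k / n ^ k ≤ 1`.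
-/

open Finset Function

section PermExtension

variable {ι α : Type*} [Fintype ι] [Fintype α]

theorem card_perm_extending_embedding (e f : ι ↪ α) :
    Nat.card {σ : Equiv.Perm α // ∀ t, σ (e t) = f t}
      = (Fintype.card α - Fintype.card ι).factorial := by
  classical
  let e₀ : Set.range e ≃ Set.range f :=
    (Equiv.ofInjective e e.injective).symm.trans (Equiv.ofInjective f f.injective)
  -- a permutation extending `f ∘ e⁻¹` is the same as a bijection between the complements
  have hcompl : {σ : Equiv.Perm α // ∀ t, σ (e t) = f t}
      ≃ (((Set.range e)ᶜ : Set α) ≃ ((Set.range f)ᶜ : Set α)) := by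
    refine (Equiv.subtypeEquivRight fun σ => ?_).trans (Equiv.Set.compl e₀)
    constructor
    · rintro h ⟨_, t, rfl⟩
      simp [e₀, h t]
    · intro h t
      simpa [e₀] using h ⟨e t, t, rfl⟩
  have hcard (g : ι ↪ α) : Fintype.card ((Set.range g)ᶜ : Set α)
      = Fintype.card α - Fintype.card ι := by
    rw [Fintype.card_compl_set, Set.card_range_of_injective g.injective]
  rw [Nat.card_congr hcompl, Nat.card_eq_fintype_card,
    Fintype.card_equiv (Fintype.equivOfCardEq ((hcard e).trans (hcard f).symm)), hcard]

theorem card_perm_comp_embedding (e : ι ↪ α) (P : (ι → α) → Prop)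
    (hP : ∀ f, P f → Injective f) :
    Nat.card {σ : Equiv.Perm α // P (σ ∘ e)}
      = Nat.card {f // P f} * (Fintype.card α - Fintype.card ι).factorial := by
  classical
  have hfibres : {σ : Equiv.Perm α // P (σ ∘ e)}
      ≃ Σ f : {f // P f}, {σ : Equiv.Perm α // ∀ t, σ (e t) = f.1 t} :=
    { toFun σ := ⟨⟨σ.1 ∘ e, σ.2⟩, σ.1, fun _ => rfl⟩
      invFun p := ⟨p.2.1, by rw [show ⇑p.2.1 ∘ e = p.1 from funext p.2.2]; exact p.1.2⟩
      left_inv _ := rfl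
      right_inv := by
        rintro ⟨⟨f, hf⟩, σ, hσ⟩
        obtain rfl : ⇑σ ∘ e = f := funext hσ
        rfl }
  rw [Nat.card_congr hfibres, Nat.card_sigma,
    Finset.sum_congr rfl fun f _ => card_perm_extending_embedding e ⟨f.1, hP f.1 f.2⟩,
    Finset.sum_const, Finset.card_univ, smul_eq_mul, Nat.card_eq_fintype_card]

end PermExtension

theorem Function.Injective.of_forall_card_filter_le_one {ι β : Type*} [Fintype ι]
    [DecidableEq β] {g : ι → β} (hg : ∀ b, #{t | g t = b} ≤ 1) : Injective g :=
  fun a b hab =>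
    Finset.card_le_one.mp (hg (g a)) a (by simp) b (by simp [hab])

theorem Fin.card_filter_lt_and {n k : ℕ} (hk : k ≤ n) (p : Fin n → Prop) [DecidablePred p] :
    #{t : Fin n | t.val < k ∧ p t} = #{t : Fin k | p (Fin.castLE hk t)} := by
  symm
  apply Finset.card_bij (fun t _ => Fin.castLE hk t)
  · intro a ha
    simp only [mem_filter, mem_univ, true_and] at ha ⊢
    exact ⟨a.isLt, ha⟩
  · intro a _ b _ h
    exact Fin.castLE_injective hk h
  · intro b hb
    simp only [mem_filter, mem_univ, true_and] at hb
    exact ⟨⟨b.val, hb.1⟩, by simpa using hb.2, rfl⟩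

theorem card_perm_rainbow_prefix {n m k : ℕ} (hk : k ≤ n) (c : Fin n → Fin m) :
    Nat.card {σ : Equiv.Perm (Fin n) // ∀ i, #{t : Fin n | t.val < k ∧ c (σ t) = i} ≤ 1}
      = Nat.card {f : Fin k → Fin n // ∀ i, #{t | c (f t) = i} ≤ 1} * (n - k).factorial := by
  have hprefix : {σ : Equiv.Perm (Fin n) // ∀ i, #{t : Fin n | t.val < k ∧ c (σ t) = i} ≤ 1}
      ≃ {σ : Equiv.Perm (Fin n) // ∀ i, #{t | c ((σ ∘ Fin.castLEEmb hk) t) = i} ≤ 1} :=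
    Equiv.subtypeEquivRight fun σ => by
      simp only [Fin.card_filter_lt_and hk, comp_apply, Fin.castLEEmb_apply]
  rw [Nat.card_congr hprefix, card_perm_comp_embedding (Fin.castLEEmb hk)
      (fun f => ∀ i, #{t | c (f t) = i} ≤ 1)
      fun _ hf => (Injective.of_forall_card_filter_le_one hf).of_comp,
    Fintype.card_fin, Fintype.card_fin]

theorem Nat.factorial_le_factorial_sub_mul_pow {n k : ℕ} (hk : k ≤ n) :
    n.factorial ≤ (n - k).factorial * n ^ k := by
  rw [← Nat.factorial_mul_descFactorial hk]
  exact Nat.mul_le_mul_left _ (Nat.descFactorial_le_pow n k)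

theorem repetition_vs_collision_r_two_general
    (n m k : ℕ) (c : Fin n → Fin m)
    (hk : k ≤ n) :
    ((Nat.card {f : Fin k → Fin n // ∀ i : Fin m,
          (Finset.univ.filter (fun t : Fin k => c (f t) = i)).card ≤ 1} : ℚ)
        / (n ^ k : ℚ)
      = ((Nat.factorial n : ℚ) / ((Nat.factorial (n - k) : ℚ) * (n ^ k : ℚ))) *
          ((Nat.card {σ : Equiv.Perm (Fin n) // ∀ i : Fin m,
              (Finset.univ.filter (fun t : Fin n => t.val < k ∧ c (σ t) = i)).card ≤ 1} : ℚ)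
            / (Nat.factorial n : ℚ)))
    ∧ (Nat.card {f : Fin k → Fin n // ∀ i : Fin m,
          (Finset.univ.filter (fun t : Fin k => c (f t) = i)).card ≤ 1} : ℚ)
        / (n ^ k : ℚ)
      ≤ (Nat.card {σ : Equiv.Perm (Fin n) // ∀ i : Fin m,
          (Finset.univ.filter (fun t : Fin n => t.val < k ∧ c (σ t) = i)).card ≤ 1} : ℚ)
        / (Nat.factorial n : ℚ) := by
  suffices key : ∀ A B : ℕ, B = A * (n - k).factorial →
      (A : ℚ) / n ^ k = n.factorial / ((n - k).factorial * n ^ k) * (B / n.factorial)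
        ∧ (A : ℚ) / n ^ k ≤ B / n.factorial from
    key _ _ (card_perm_rainbow_prefix hk c)
  rintro A B rfl
  have hratio : (n.factorial : ℚ) / ((n - k).factorial * n ^ k) ≤ 1 :=
    div_le_one_of_le₀ (by exact_mod_cast Nat.factorial_le_factorial_sub_mul_pow hk)
      (by positivity)
  have heq : (A : ℚ) / n ^ k = n.factorial / ((n - k).factorial * n ^ k)
      * ((A * (n - k).factorial : ℕ) / n.factorial) := by
    push_cast
    field_simp
  exact ⟨heq, heq ▸ mul_le_of_le_one_left (by positivity) hratio⟩

/-- For `r = 2`: `P(R_2 > k) = (n!/((n-k)! n^k)) · P(K_2^{(1)} > k)` for `k ≤ n`,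
and consequently `P(K_2^{(1)} > k) ≥ P(R_2 > k)`. -/
theorem repetition_vs_collision_r_two
    (n m k : ℕ) (x : Fin m → ℕ) (c : Fin n → Fin m)
    (hx : ∀ i, (Finset.univ.filter (fun b : Fin n => c b = i)).card = x i)
    (hn : ∑ i, x i = n) (hk : k ≤ n) :
    ((Nat.card {f : Fin k → Fin n // ∀ i : Fin m,
          (Finset.univ.filter (fun t : Fin k => c (f t) = i)).card ≤ 1} : ℚ)
        / (n ^ k : ℚ)
      = ((Nat.factorial n : ℚ) / ((Nat.factorial (n - k) : ℚ) * (n ^ k : ℚ))) *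
          ((Nat.card {σ : Equiv.Perm (Fin n) // ∀ i : Fin m,
              (Finset.univ.filter (fun t : Fin n => t.val < k ∧ c (σ t) = i)).card ≤ 1} : ℚ)
            / (Nat.factorial n : ℚ)))
    ∧ (Nat.card {f : Fin k → Fin n // ∀ i : Fin m,
          (Finset.univ.filter (fun t : Fin k => c (f t) = i)).card ≤ 1} : ℚ)
        / (n ^ k : ℚ)
      ≤ (Nat.card {σ : Equiv.Perm (Fin n) // ∀ i : Fin m,
          (Finset.univ.filter (fun t : Fin n => t.val < k ∧ c (σ t) = i)).card ≤ 1} : ℚ)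
        / (Nat.factorial n : ℚ) :=
  repetition_vs_collision_r_two_general n m k c hk
end

section
/- The generating function g_r^{(1)}(u) := sum_{k≥0} u^k P(K_r^{(1)} > k) admits the integral representation g_r^{(1)}(u) = (n+1) ∫_0^1 (1-t)^n ∏_{i=1}^m p_r(x_i, u t/(1-t)) dt. -/
open Finset MeasureTheory

/-- `p_r(x,s) = ∑_{j=0}^{r-1} binom(x,j) s^j` as a real function. -/
noncomputable def prR (r x : ℕ) (s : ℝ) : ℝ :=
  ∑ j ∈ Finset.range r, (Nat.choose x j : ℝ) * s ^ j

/-!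
Expanding over the colour classes, `∏ i, p_r(x_i, s)` is the generating polynomial `∑ s ^ #S` of
the sets `S` of balls containing fewer than `r` balls of each colour. The event `K > k` says that
the first `k` balls drawn form such a set, and each `k`-set is the set of the first `k` balls for
exactly `k! (n-k)!` of the `n!` orders. On the other side the Beta integral
`(n+1) ∫₀¹ t^k (1-t)^(n-k) dt = k! (n-k)! / n!` gives every set `S` of size `k` the same weight
`u^k k! (n-k)! / n!`. The series is a finite sum since the whole urn has an `r`-collision.
-/

open scoped Nat

theorem integral_pow_mul_one_sub_pow (a b : ℕ) :
    ∫ x in (0:ℝ)..1, x ^ a * (1 - x) ^ b = (a ! * b ! / (a + b + 1)! : ℝ) := by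
  have h := Complex.betaIntegral_eq_Gamma_mul_div (a + 1) (b + 1)
    (by simp only [Complex.add_re, Complex.natCast_re, Complex.one_re]; positivity)
    (by simp only [Complex.add_re, Complex.natCast_re, Complex.one_re]; positivity)
  rw [show (a : ℂ) + 1 + (b + 1) = ((a + b + 1 : ℕ) : ℂ) + 1 by push_cast; ring,
    Complex.Gamma_nat_eq_factorial, Complex.Gamma_nat_eq_factorial,
    Complex.Gamma_nat_eq_factorial, Complex.betaIntegral] at h
  simp only [add_sub_cancel_right, Complex.cpow_natCast] at h
  apply Complex.ofReal_injective
  rw [← intervalIntegral.integral_ofReal]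
  push_cast
  exact h

theorem one_sub_pow_mul_div_pow {j n : ℕ} (hj : j ≤ n) (u : ℝ) {t : ℝ} (ht : t ≠ 1) :
    (1 - t) ^ n * (u * t / (1 - t)) ^ j = u ^ j * (t ^ j * (1 - t) ^ (n - j)) := by
  have : 1 - t ≠ 0 := sub_ne_zero.2 ht.symm
  rw [← Nat.sub_add_cancel hj, pow_add, Nat.add_sub_cancel, div_pow]
  field_simp
  ring

theorem sum_powerset_filter_card_lt_pow {α : Type*} (F : Finset α) (r : ℕ) (s : ℝ) :
    ∑ T ∈ F.powerset with #T < r, s ^ #T = prR r #F s := by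
  rw [prR, ← sum_fiberwise_of_maps_to (g := card) (t := range r) (by simp)]
  refine sum_congr rfl fun j _ => ?_
  rw [filter_filter, sum_congr (s₂ := powersetCard j F) (g := fun _ => s ^ j), sum_const,
    card_powersetCard, nsmul_eq_mul]
  · ext T; simp [mem_powersetCard]; grind
  · intro T hT; rw [(mem_powersetCard.1 hT).2]

section Perm

variable {α : Type*} [DecidableEq α]

theorem image_perm_eq_iff (σ : Equiv.Perm α) (A S : Finset α) :
    A.image σ = S ↔ ∀ a, a ∈ A ↔ σ a ∈ S := by
  rw [Finset.ext_iff, ← σ.forall_congr_right]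
  simp

def permImageEquiv (A S : Finset α) :
    {σ : Equiv.Perm α // A.image σ = S} ≃
      ({a // a ∈ A} ≃ {b // b ∈ S}) × ({a // a ∉ A} ≃ {b // b ∉ S}) where
  toFun σ := (σ.1.subtypeEquiv ((image_perm_eq_iff _ _ _).1 σ.2),
    σ.1.subtypeEquiv fun a => not_congr ((image_perm_eq_iff _ _ _).1 σ.2 a))
  invFun e := ⟨Equiv.subtypeCongr e.1 e.2, (image_perm_eq_iff _ _ _).2 fun a => by
    by_cases ha : a ∈ A <;> simp [Equiv.subtypeCongr, Equiv.sumCompl_symm_apply_of_pos,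
      Equiv.sumCompl_symm_apply_of_neg, ha, (e.2 _).2]⟩
  left_inv σ := by
    ext a
    by_cases ha : a ∈ A <;> simp [Equiv.subtypeCongr, Equiv.sumCompl_symm_apply_of_pos,
      Equiv.sumCompl_symm_apply_of_neg, ha]
  right_inv e := by
    ext ⟨a, ha⟩ <;> simp [Equiv.subtypeCongr, Equiv.sumCompl_symm_apply_of_pos,
      Equiv.sumCompl_symm_apply_of_neg, ha]

variable [Fintype α]

theorem card_perm_image_eq {A S : Finset α} (h : #A = #S) :
    #{σ : Equiv.Perm α | A.image σ = S} = (#A)! * (Fintype.card α - #A)! := by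
  rw [← Fintype.card_subtype, Fintype.card_congr (permImageEquiv A S), Fintype.card_prod,
    Fintype.card_equiv (Fintype.equivOfCardEq (by simp [h])),
    Fintype.card_equiv (Fintype.equivOfCardEq (by simp [Fintype.card_subtype_compl, h]))]
  simp [Fintype.card_subtype_compl]

theorem card_perm_filter_image (A : Finset α) (P : Finset α → Prop) [DecidablePred P] :
    #{σ : Equiv.Perm α | P (A.image σ)} =
      (#A)! * (Fintype.card α - #A)! * #{S ∈ powersetCard #A univ | P S} := by
  rw [card_eq_sum_card_fiberwise (f := fun σ : Equiv.Perm α => A.image σ)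
    (t := {S ∈ powersetCard #A univ | P S}) fun σ hσ => by
      simp_all [card_image_of_injective _ σ.injective]]
  refine (sum_const_nat fun S hS => ?_).trans (mul_comm _ _)
  rw [mem_filter, mem_powersetCard_univ] at hS
  rw [filter_filter, ← card_perm_image_eq hS.1.symm]
  exact congrArg card <| filter_congr fun σ _ => ⟨And.right, fun h => ⟨h ▸ hS.2, h⟩⟩

end Perm

section Fibers

variable {α ι : Type*} [DecidableEq α] [Fintype ι] [DecidableEq ι] (c : α → ι)

theorem filter_biUnion_fiber {T : ι → Finset α} (hT : ∀ i, ∀ b ∈ T i, c b = i) (i : ι) :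
    {b ∈ univ.biUnion T | c b = i} = T i := by
  ext b
  simp only [mem_filter, mem_biUnion, mem_univ, true_and]
  constructor
  · rintro ⟨⟨j, hb⟩, rfl⟩
    rwa [hT j b hb]
  · exact fun hb => ⟨⟨i, hb⟩, hT i b hb⟩

theorem sum_filter_fiber_card_lt_pow [Fintype α] (r : ℕ) (s : ℝ) :
    ∑ S : Finset α with ∀ i, #{b ∈ S | c b = i} < r, s ^ #S =
      ∏ i, prR r #{b | c b = i} s := by
  simp_rw [← sum_powerset_filter_card_lt_pow, prod_univ_sum]
  have fiber : ∀ T ∈ Fintype.piFinset fun i => {U ∈ powerset {b | c b = i} | #U < r},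
      ∀ i, ∀ b ∈ T i, c b = i := fun T hT i b hb => by
    simpa using (mem_powerset.1 (mem_filter.1 (Fintype.mem_piFinset.1 hT i)).1) hb
  symm
  refine sum_nbij' (fun T => univ.biUnion T) (fun S i => {b ∈ S | c b = i}) ?_ ?_ ?_ ?_ ?_
  · intro T hT
    simp_all [filter_biUnion_fiber c (fiber T hT)]
  · intro S hS
    simp_all [subset_iff]
  · intro T hT
    exact funext (filter_biUnion_fiber c (fiber T hT))
  · intro S _
    ext b; simp
  · intro T hT
    rw [prod_pow_eq_pow_sum, card_biUnion]
    intro i _ j _ hij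
    exact disjoint_left.2 fun b hi hj =>
      hij ((fiber T hT i b hi).symm.trans (fiber T hT j b hj))

theorem integral_prod_prR_eq_sum [Fintype α] (r : ℕ) (u : ℝ) :
    (Fintype.card α + 1) * ∫ t in (0:ℝ)..1,
        (1 - t) ^ Fintype.card α * ∏ i, prR r #{b | c b = i} (u * t / (1 - t)) =
      ∑ S : Finset α with ∀ i, #{b ∈ S | c b = i} < r,
        u ^ #S * ((#S)! * (Fintype.card α - #S)! / (Fintype.card α)! : ℝ) := by
  set n := Fintype.card α
  have hpoly :
      (fun t : ℝ => (1 - t) ^ n * ∏ i, prR r #{b | c b = i} (u * t / (1 - t))) =ᵐ[volume]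
      fun t => ∑ S : Finset α with ∀ i, #{b ∈ S | c b = i} < r,
        u ^ #S * (t ^ #S * (1 - t) ^ (n - #S)) := by
    filter_upwards [Measure.ae_ne volume 1] with t ht
    rw [← sum_filter_fiber_card_lt_pow, mul_sum]
    exact sum_congr rfl fun S _ => one_sub_pow_mul_div_pow (card_le_univ S) u ht
  rw [intervalIntegral.integral_congr_ae (hpoly.mono fun t ht _ => ht),
    intervalIntegral.integral_finsetSum fun S _ =>
      (by fun_prop : Continuous _).intervalIntegrable _ _, mul_sum]
  refine sum_congr rfl fun S _ => ?_
  rw [intervalIntegral.integral_const_mul, integral_pow_mul_one_sub_pow,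
    Nat.add_sub_cancel' (card_le_univ S), Nat.factorial_succ]
  push_cast
  field_simp
  ring

end Fibers

section Collisions

variable {n : ℕ} {ι : Type*} [Fintype ι] [DecidableEq ι] (c : Fin n → ι) {r : ℕ}

theorem card_perm_no_collision (hr : 0 < r) (k : ℕ) :
    Nat.card {σ : Equiv.Perm (Fin n) // ∀ i, #{t | t.val < k ∧ c (σ t) = i} ≤ r - 1} =
      (min n k)! * (n - min n k)! *
        #{S ∈ powersetCard (min n k) univ | ∀ i, #{b ∈ S | c b = i} < r} := by
  have h := card_perm_filter_image {t : Fin n | t.val < k} fun S => ∀ i, #{b ∈ S | c b = i} < r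
  rw [Fin.card_filter_val_lt, Fintype.card_fin] at h
  rw [← h, Nat.card_eq_fintype_card, Fintype.card_subtype]
  refine congrArg card (filter_congr fun σ _ => forall_congr' fun i => ?_)
  rw [Nat.le_sub_one_iff_lt hr, filter_image, card_image_of_injective _ σ.injective,
    filter_filter]

theorem tsum_card_perm_no_collision (hr : 0 < r) (hcoll : ∃ i, r ≤ #{b | c b = i}) (u : ℝ) :
    ∑' k : ℕ, u ^ k *
        ((Nat.card {σ : Equiv.Perm (Fin n) //
            ∀ i, #{t | t.val < k ∧ c (σ t) = i} ≤ r - 1} : ℝ) / n !) =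
      ∑ S : Finset (Fin n) with ∀ i, #{b ∈ S | c b = i} < r,
        u ^ #S * ((#S)! * (n - #S)! / n ! : ℝ) := by
  obtain ⟨i₀, hi₀⟩ := hcoll
  have htail : ∀ k, n ≤ k →
      #{S ∈ powersetCard (min n k) univ | ∀ i, #{b ∈ S | c b = i} < r} = 0 := by
    intro k hk
    rw [min_eq_left hk, card_eq_zero, filter_eq_empty_iff]
    intro S hS
    obtain rfl : S = univ := eq_univ_of_card S (by simpa using hS)
    exact fun h => (h i₀).not_ge hi₀
  rw [tsum_eq_sum (s := range (n + 1)) fun k hk => by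
    rw [card_perm_no_collision c hr, htail k (by simp at hk; omega)]
    simp]
  rw [← sum_fiberwise_of_maps_to (g := card) (t := range (n + 1)) fun S _ => by
    simpa [Nat.lt_succ_iff] using card_le_univ S]
  refine sum_congr rfl fun k hk => ?_
  rw [card_perm_no_collision c hr, min_eq_right (mem_range_succ_iff.1 hk),
    sum_congr rfl fun S hS => by rw [(mem_filter.1 hS).2], sum_const, nsmul_eq_mul, filter_filter]
  have hfilter : {S ∈ powersetCard k (univ : Finset (Fin n)) | ∀ i, #{b ∈ S | c b = i} < r} =
      ({S | (∀ i, #{b ∈ S | c b = i} < r) ∧ #S = k} : Finset (Finset (Fin n))) := by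
    ext S; simp [and_comm]
  rw [hfilter]
  push_cast
  ring

end Collisions

theorem gen_fun_collision_without_replacement_integral_general
    (n m r : ℕ) (x : Fin m → ℕ) (c : Fin n → Fin m)
    (hx : ∀ i, (Finset.univ.filter (fun b : Fin n => c b = i)).card = x i)
    (hr : 2 ≤ r) (hex : ∃ i, r ≤ x i) (u : ℝ) :
    (∑' k : ℕ, u ^ k *
        ((Nat.card {σ : Equiv.Perm (Fin n) // ∀ i : Fin m,
            (Finset.univ.filter (fun t : Fin n => t.val < k ∧ c (σ t) = i)).card ≤ r - 1} : ℝ)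
          / (Nat.factorial n : ℝ)))
    = (n + 1) * ∫ t in (0:ℝ)..1, (1 - t) ^ n * ∏ i, prR r (x i) (u * t / (1 - t)) := by
  simp only [← hx] at hex ⊢
  have hint := integral_prod_prR_eq_sum c r u
  rw [Fintype.card_fin] at hint
  rw [tsum_card_perm_no_collision c (by omega) hex, hint]

/-- Integral representation of the generating function of `P(K_r^{(1)} > k)`:
`∑_k u^k P(K_r^{(1)} > k) = (n+1) ∫_0^1 (1-t)^n ∏_i p_r(x_i, ut/(1-t)) dt`. -/
theorem gen_fun_collision_without_replacement_integral
    (n m r : ℕ) (x : Fin m → ℕ) (c : Fin n → Fin m)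
    (hx : ∀ i, (Finset.univ.filter (fun b : Fin n => c b = i)).card = x i)
    (hn : ∑ i, x i = n) (hr : 2 ≤ r) (hex : ∃ i, r ≤ x i) (u : ℝ) :
    (∑' k : ℕ, u ^ k *
        ((Nat.card {σ : Equiv.Perm (Fin n) // ∀ i : Fin m,
            (Finset.univ.filter (fun t : Fin n => t.val < k ∧ c (σ t) = i)).card ≤ r - 1} : ℝ)
          / (Nat.factorial n : ℝ)))
    = (n + 1) * ∫ t in (0:ℝ)..1, (1 - t) ^ n * ∏ i, prR r (x i) (u * t / (1 - t)) :=
  gen_fun_collision_without_replacement_integral_general n m r x c hx hr hex u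
end

section
/- The expected r-repetition time for drawing with replacement from configuration (x_1,...,x_m) satisfies E(R_r) = n ∫_0^∞ e^{-ns} ∏_{i=1}^m q_r(x_i s) ds, where q_r(t) = sum_{i=0}^{r-1} t^i/i!. -/
open Finset MeasureTheory

/-- `q_r(t) = ∑_{i=0}^{r-1} t^i/i!` as a real function. -/
noncomputable def qrR (r : ℕ) (t : ℝ) : ℝ :=
  ∑ i ∈ Finset.range r, t ^ i / (Nat.factorial i : ℝ)

/-!
Group the words `f : Fin k → Fin n` by their colour profile `d`, where `d i` is the number of
letters of colour `i`. A profile is realised by `multinomial d * ∏ i, x i ^ d i` words, and the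
words avoiding an `r`-fold colour are those whose profile lies in `{0, …, r - 1}^m`. Weighting
by `n^{-k}` and summing over `k`, the left side is therefore
`∑_{d < r} multinomial d * ∏ x_i^{d_i} / n^{|d|}`. On the right, `∏ q_r(x_i s)` expands to
`∑_{d < r} (∏ x_i^{d_i}/d_i!) s^{|d|}`, and `n ∫_0^∞ e^{-ns} s^k ds = k!/n^k` turns each term into
the same summand, since `|d|!/∏ d_i! = multinomial d`.
-/

open scoped Nat
open Real

section ColourProfiles

variable {α β : Type*} [Fintype α] [DecidableEq α] [Fintype β]

@[to_additive]
theorem Fintype.prod_comp_eq_prod_pow_card {M : Type*} [CommMonoid M] (c : β → α) (g : α → M) :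
    ∏ b, g (c b) = ∏ i, g i ^ #{b | c b = i} := by
  simp_rw [← Finset.prod_fiberwise' univ c g, prod_const]

open MvPolynomial in
theorem card_filter_fiber_card_eq (c : β → α) {k : ℕ} (d : α → ℕ) (hd : ∑ i, d i = k) :
    #{f : Fin k → β | ∀ i, #{t | c (f t) = i} = d i}
      = Nat.multinomial univ d * ∏ i, #{b | c b = i} ^ d i := by
  -- Read off the coefficient of `X^d` in `(∑ b, X (c b))^k`, expanded once as a sum over
  -- words and once by the multinomial theorem.
  set D : α →₀ ℕ := Finsupp.equivFunOnFinite.symm d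
  have hwords : coeff D ((∑ b, X (c b) : MvPolynomial α ℕ) ^ k)
      = #{f : Fin k → β | ∀ i, #{t | c (f t) = i} = d i} := by
    simp_rw [Fintype.sum_pow, coeff_sum, Fintype.prod_comp_eq_prod_pow_card, coeff_prod_X_pow]
    rw [card_filter]
    refine sum_congr rfl fun f _ => if_congr ?_ rfl rfl
    simp [D, Finsupp.ext_iff, eq_comm]
  rw [← hwords, Fintype.sum_comp_eq_sum_nsmul_card c X,
    coeff_linearCombination_X_pow_of_fintype, Finsupp.sum_fintype _ _ fun _ => rfl,
    Finsupp.prod_fintype _ _ fun _ => pow_zero _,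
    Finsupp.multinomial_eq_of_support_subset (subset_univ _)]
  simp [D, hd]

theorem card_filter_forall_fiber_card_lt (c : β → α) (k r : ℕ) :
    #{f : Fin k → β | ∀ i, #{t | c (f t) = i} < r}
      = ∑ d ∈ Fintype.piFinset (fun _ : α => range r) with ∑ i, d i = k,
          Nat.multinomial univ d * ∏ i, #{b | c b = i} ^ d i := by
  rw [card_eq_sum_card_fiberwise (f := fun f i => #{t | c (f t) = i})
    (t := {d ∈ Fintype.piFinset (fun _ : α => range r) | ∑ i, d i = k}) ?maps_to]
  case maps_to =>
    intro f hf
    have hlen := card_eq_sum_card_fiberwise (f := c ∘ f) (s := univ) (t := univ) fun _ _ => mem_univ _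
    simp_all
  refine sum_congr rfl fun d hd => ?_
  obtain ⟨hdr, hdk⟩ := mem_filter.1 hd
  rw [← card_filter_fiber_card_eq c d hdk, filter_filter]
  congr 1
  refine filter_congr fun f _ => ?_
  rw [funext_iff]
  refine and_iff_right_of_imp fun h i => ?_
  simpa [h i] using Fintype.mem_piFinset.1 hdr i

end ColourProfiles

theorem tsum_sum_filter_eq_sum {ι M : Type*} [AddCommMonoid M] [TopologicalSpace M]
    [ContinuousAdd M] [T2Space M] (D : Finset ι) (e : ι → ℕ) (g : ι → ℕ → M) :
    ∑' k, ∑ d ∈ D with e d = k, g d k = ∑ d ∈ D, g d (e d) := by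
  rw [← (hasSum_sum fun d _ => hasSum_ite_eq (e d) (g d (e d))).tsum_eq]
  refine tsum_congr fun k => ?_
  rw [sum_filter]
  refine sum_congr rfl fun d _ => ?_
  split_ifs <;> simp_all

theorem integral_exp_neg_mul_mul_pow {a : ℝ} (ha : 0 < a) (k : ℕ) :
    ∫ s in Set.Ioi 0, exp (-a * s) * s ^ k = k ! / a ^ (k + 1) := by
  have h := integral_rpow_mul_exp_neg_mul_Ioi (a := k + 1) (by positivity) ha
  simp only [add_sub_cancel_right, rpow_natCast, Gamma_nat_eq_factorial] at h
  simp_rw [neg_mul, mul_comm (exp _)]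
  rw [h, ← Nat.cast_succ, rpow_natCast, one_div, inv_pow, div_eq_mul_inv, mul_comm]

theorem mul_integral_exp_neg_mul_mul_sum_pow {ι : Type*} {a : ℝ} (ha : 0 < a) (D : Finset ι)
    (w : ι → ℝ) (e : ι → ℕ) :
    a * ∫ s in Set.Ioi 0, exp (-a * s) * ∑ d ∈ D, w d * s ^ e d
      = ∑ d ∈ D, w d * (e d)! / a ^ e d := by
  have hint (k : ℕ) : IntegrableOn (fun s => exp (-a * s) * s ^ k) (Set.Ioi 0) :=
    .of_integral_ne_zero (by rw [integral_exp_neg_mul_mul_pow ha]; positivity)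
  simp_rw [mul_sum, mul_left_comm (exp _)]
  rw [integral_finsetSum _ fun d _ => (hint (e d)).const_mul (w d), mul_sum]
  refine sum_congr rfl fun d _ => ?_
  rw [integral_const_mul, integral_exp_neg_mul_mul_pow ha, pow_succ]
  field_simp

theorem prod_qrR_mul_eq_sum {ι : Type*} [Fintype ι] [DecidableEq ι] (r : ℕ) (y : ι → ℝ) (s : ℝ) :
    ∏ i, qrR r (y i * s)
      = ∑ d ∈ Fintype.piFinset fun _ => range r, (∏ i, y i ^ d i / (d i)!) * s ^ ∑ i, d i := by
  simp_rw [qrR, prod_univ_sum, ← prod_pow_eq_pow_sum, ← prod_mul_distrib, mul_pow,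
    div_mul_eq_mul_div]

theorem prod_pow_div_factorial_mul_factorial_sum {ι K : Type*} [Fintype ι] [Field K] [CharZero K]
    (y : ι → K) (d : ι → ℕ) :
    (∏ i, y i ^ d i / (d i)!) * (∑ i, d i)! = Nat.multinomial univ d * ∏ i, y i ^ d i := by
  have hfact : ∏ i, ((d i)! : K) ≠ 0 :=
    prod_ne_zero_iff.2 fun i _ => Nat.cast_ne_zero.2 (Nat.factorial_ne_zero _)
  rw [← Nat.multinomial_spec, prod_div_distrib]
  push_cast
  field_simp

/-- The left side is `E(R_r) = ∑_{k ≥ 0} P(R_r > k)`, with `n^k P(R_r > k)` counted as the number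
of words of length `k` in which no colour occurs `r` times. -/
theorem expected_repetition_time_integral_general
    (n m r : ℕ) (x : Fin m → ℕ) (c : Fin n → Fin m)
    (hx : ∀ i, (Finset.univ.filter (fun b : Fin n => c b = i)).card = x i)
    (hr : 2 ≤ r) (hex : ∃ i, r ≤ x i) :
    (∑' k : ℕ,
        ((Nat.card {f : Fin k → Fin n // ∀ i : Fin m,
            (Finset.univ.filter (fun t : Fin k => c (f t) = i)).card ≤ r - 1} : ℝ)
          / (n ^ k : ℝ)))
    = n * ∫ s in Set.Ioi (0:ℝ), Real.exp (-(n : ℝ) * s) * ∏ i, qrR r ((x i : ℝ) * s) := by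
  have hn : (0 : ℝ) < n := by
    obtain ⟨i, hi⟩ := hex
    have hxn : x i ≤ n := hx i ▸ (card_filter_le _ _).trans (Finset.card_fin n).le
    exact_mod_cast (by omega : 0 < n)
  have hcard (k : ℕ) : Nat.card {f : Fin k → Fin n // ∀ i : Fin m, #{t | c (f t) = i} ≤ r - 1}
      = ∑ d ∈ Fintype.piFinset (fun _ : Fin m => range r) with ∑ i, d i = k,
          Nat.multinomial univ d * ∏ i, x i ^ d i := by
    simp_rw [Nat.le_sub_one_iff_lt (by omega : 0 < r), Nat.card_eq_fintype_card,
      Fintype.card_subtype, ← hx]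
    convert card_filter_forall_fiber_card_lt c k r
  simp_rw [hcard, prod_qrR_mul_eq_sum, mul_integral_exp_neg_mul_mul_sum_pow hn,
    prod_pow_div_factorial_mul_factorial_sum]
  push_cast [sum_div]
  exact tsum_sum_filter_eq_sum _ _ fun d k => _ / (n : ℝ) ^ k

/-- Expected `r`-repetition time for sampling with replacement:
`E(R_r) = n ∫_0^∞ e^{-ns} ∏_i q_r(x_i s) ds`
(the expectation is written as `∑_{k≥0} P(R_r > k)`). -/
theorem expected_repetition_time_integral
    (n m r : ℕ) (x : Fin m → ℕ) (c : Fin n → Fin m)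
    (hx : ∀ i, (Finset.univ.filter (fun b : Fin n => c b = i)).card = x i)
    (hn : ∑ i, x i = n) (hr : 2 ≤ r) (hex : ∃ i, r ≤ x i) :
    (∑' k : ℕ,
        ((Nat.card {f : Fin k → Fin n // ∀ i : Fin m,
            (Finset.univ.filter (fun t : Fin k => c (f t) = i)).card ≤ r - 1} : ℝ)
          / (n ^ k : ℝ)))
    = n * ∫ s in Set.Ioi (0:ℝ), Real.exp (-(n : ℝ) * s) * ∏ i, qrR r ((x i : ℝ) * s) :=
  expected_repetition_time_integral_general n m r x c hx hr hex
end

section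
/- If exactly one index i has x_i ≥ r, with x_i = x, then E(K_r^{(1)}) = r(n+1)/(x+1) and E(K_r^{(2)}) = n · sum_{i=0}^{r-1} 1/(x-i). -/
/-!
Only colour `i₀` can be drawn `r` times, so both events reduce to "fewer than `r` draws of colour
`i₀`"; write `a` for its number of balls.

Without replacement, the positions of the `a` balls of colour `i₀` form a uniformly distributed
`a`-subset `T` of `Fin n`: each `T` comes from `a! (n - a)!` permutations. The number of `T` with
`|T ∩ [0, k)| = j` is `C(k, j) C(n - k, a - j)`, and the upper Chu–Vandermonde identity
`∑ₖ C(k, j) C(n - k, a - j) = C(n + 1, a + 1)` sums the prefix lengths `k` away.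

With replacement, let `F j k` count the sequences of `k` draws that hit exactly `j` distinct balls
of colour `i₀`. Appending a draw gives `F j (k+1) = (n - a + j) F j k + (a + 1 - j) F (j - 1) k`,
so `uⱼ = ∑ₖ F j k / nᵏ` satisfies `(a - j) uⱼ = n [j = 0] + (a + 1 - j) uⱼ₋₁`,
i.e. `uⱼ = n / (a - j)`.
-/

open Finset
open scoped Nat

theorem Nat.sum_range_choose_mul_choose_sub (n i j : ℕ) :
    ∑ u ∈ range (n + 1), u.choose j * (n - u).choose i = (n + 1).choose (i + j + 1) := by
  induction n generalizing i with
  | zero => cases i <;> cases j <;> simp [Nat.choose_succ_succ, ← add_assoc]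
  | succ n ih =>
    rw [sum_range_succ, Nat.sub_self]
    cases i with
    | zero =>
      have ih0 := ih 0
      simp only [Nat.choose_zero_right, mul_one] at ih0 ⊢
      rw [ih0, zero_add, Nat.choose_succ_succ (n + 1) j]
      ring
    | succ i =>
      have hsplit : ∀ u ∈ range (n + 1), u.choose j * (n + 1 - u).choose (i + 1)
          = u.choose j * (n - u).choose i + u.choose j * (n - u).choose (i + 1) := by
        intro u hu
        rw [Nat.sub_add_comm (by simpa [Nat.lt_succ_iff] using hu), Nat.choose_succ_succ, mul_add]
      rw [sum_congr rfl hsplit, sum_add_distrib, ih, ih, Nat.choose_zero_succ, mul_zero, add_zero,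
        show i + 1 + j + 1 = (i + j + 1) + 1 by ring, Nat.choose_succ_succ (n + 1)]

theorem Finset.card_filter_lt_eq_sum_card_filter_eq {β : Type*} (s : Finset β) (g : β → ℕ)
    (r : ℕ) :
    #{x ∈ s | g x < r} = ∑ j ∈ range r, #{x ∈ s | g x = j} := by
  rw [card_eq_sum_card_fiberwise (f := g) (t := range r)
    fun x hx => mem_range.2 (mem_filter.1 hx).2]
  refine sum_congr rfl fun j hj => ?_
  rw [filter_filter]
  exact congrArg card (filter_congr fun x _ => by grind)

theorem Finset.card_powersetCard_filter_card_inter_eq {α : Type*} [DecidableEq α] {U K : Finset α}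
    (hK : K ⊆ U) (i j : ℕ) :
    #{T ∈ powersetCard (i + j) U | #(T ∩ K) = j} = (#K).choose j * (#(U \ K)).choose i := by
  rw [← card_powersetCard, ← card_powersetCard, ← card_product]
  refine card_nbij' (fun T => (T ∩ K, T \ K)) (fun P => P.1 ∪ P.2) ?_ ?_ ?_ ?_
  · intro T hT
    simp only [coe_filter, mem_powersetCard, Set.mem_ofPred_eq, coe_product, Set.mem_prod,
      mem_coe] at hT ⊢
    have := card_sdiff_add_card_inter T K
    exact ⟨⟨inter_subset_right, hT.2⟩, sdiff_subset_sdiff hT.1.1 subset_rfl, by omega⟩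
  · rintro ⟨A, B⟩ hP
    simp only [coe_filter, mem_powersetCard, Set.mem_ofPred_eq, coe_product, Set.mem_prod,
      mem_coe] at hP ⊢
    obtain ⟨⟨hA, rfl⟩, hB, rfl⟩ := hP
    have hBK : Disjoint B K := disjoint_of_subset_left hB sdiff_disjoint
    refine ⟨⟨union_subset (hA.trans hK) (hB.trans sdiff_subset), ?_⟩, ?_⟩
    · rw [card_union_of_disjoint (disjoint_of_subset_left hA hBK.symm), add_comm]
    · rw [union_inter_distrib_right, inter_eq_left.2 hA, disjoint_iff_inter_eq_empty.1 hBK,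
        union_empty]
  · intro T _
    exact (union_comm _ _).trans (sdiff_union_inter T K)
  · rintro ⟨A, B⟩ hP
    simp only [coe_product, Set.mem_prod, mem_coe, mem_powersetCard] at hP
    have hBK : Disjoint B K := disjoint_of_subset_left hP.2.1 sdiff_disjoint
    simp only [union_inter_distrib_right, inter_eq_left.2 hP.1.1,
      disjoint_iff_inter_eq_empty.1 hBK, union_empty, union_sdiff_distrib,
      sdiff_eq_empty_iff_subset.2 hP.1.1, empty_union, hBK.sdiff_eq_left]

theorem hasSum_of_linear_recurrence {x y : ℕ → ℝ} {q b Y : ℝ} (hx : ∀ k, 0 ≤ x k)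
    (hy0 : ∀ k, 0 ≤ y k) (hq1 : q < 1) (hb : 0 ≤ b) (hy : HasSum y Y)
    (h : ∀ k, x (k + 1) = q * x k + b * y k) :
    HasSum x ((x 0 + b * Y) / (1 - q)) := by
  have hshift : ∀ K, ∑ k ∈ range (K + 1), x k
      = x 0 + q * ∑ k ∈ range K, x k + b * ∑ k ∈ range K, y k := fun K => by
    rw [sum_range_succ', sum_congr rfl fun k _ => h k, sum_add_distrib, ← mul_sum, ← mul_sum]
    ring
  have hsum : Summable x := by
    refine summable_of_sum_range_le hx (c := (x 0 + b * Y) / (1 - q)) fun K => ?_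
    have hyK := sum_le_hasSum (range K) (fun k _ => hy0 k) hy
    have hxK : ∑ k ∈ range K, x k ≤ ∑ k ∈ range (K + 1), x k := by
      rw [sum_range_succ]; linarith [hx K]
    rw [le_div_iff₀ (by linarith)]
    nlinarith [hshift K]
  convert hsum.hasSum using 1
  have hrec : ∑' k, x k = x 0 + (q * ∑' k, x k + b * Y) := by
    conv_lhs => rw [hsum.tsum_eq_zero_add]
    rw [tsum_congr h, (hsum.mul_left q).tsum_add (hy.summable.mul_left b), tsum_mul_left,
      tsum_mul_left, hy.tsum_eq]
  rw [div_eq_iff (by linarith)]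
  linarith

namespace Equiv

variable {α : Type*} {p q : α → Prop} [DecidablePred p] [DecidablePred q]

theorem subtypeCongr_apply_of_pos (e : {x // p x} ≃ {x // q x}) (f : {x // ¬p x} ≃ {x // ¬q x})
    {x : α} (h : p x) : e.subtypeCongr f x = e ⟨x, h⟩ := by
  simp [subtypeCongr, sumCompl_symm_apply_of_pos h]

theorem subtypeCongr_apply_of_neg (e : {x // p x} ≃ {x // q x}) (f : {x // ¬p x} ≃ {x // ¬q x})
    {x : α} (h : ¬p x) : e.subtypeCongr f x = f ⟨x, h⟩ := by
  simp [subtypeCongr, sumCompl_symm_apply_of_neg h]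

end Equiv

def Equiv.Perm.compIffEquivProd {α : Type*} (p q : α → Prop) [DecidablePred p] [DecidablePred q] :
    {σ : Perm α // ∀ t, q (σ t) ↔ p t}
      ≃ ({t // p t} ≃ {b // q b}) × ({t // ¬p t} ≃ {b // ¬q b}) where
  toFun σ := (σ.1.subtypeEquiv fun t => (σ.2 t).symm,
    σ.1.subtypeEquiv fun t => not_congr (σ.2 t).symm)
  invFun ef := ⟨ef.1.subtypeCongr ef.2, fun t => by
    by_cases ht : p t
    · simpa [subtypeCongr_apply_of_pos _ _ ht, ht] using (ef.1 ⟨t, ht⟩).2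
    · simpa [subtypeCongr_apply_of_neg _ _ ht, ht] using (ef.2 ⟨t, ht⟩).2⟩
  left_inv σ := by
    ext t
    by_cases ht : p t
    · simp [subtypeCongr_apply_of_pos _ _ ht]
    · simp [subtypeCongr_apply_of_neg _ _ ht]
  right_inv ef := by
    ext t
    · simp [subtypeCongr_apply_of_pos _ _ t.2]
    · simp [subtypeCongr_apply_of_neg _ _ t.2]

theorem Equiv.Perm.card_filter_comp {α : Type*} [Fintype α] [DecidableEq α] (σ : Equiv.Perm α)
    (q : α → Prop) [DecidablePred q] : #{t | q (σ t)} = #{t | q t} :=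
  card_equiv σ (by simp)

theorem Equiv.Perm.card_preimage_filter_eq {α : Type*} [Fintype α] [DecidableEq α] (p : α → Prop)
    [DecidablePred p] (T : Finset α) (hT : #T = #{b | p b}) :
    #{σ : Equiv.Perm α | ({t | p (σ t)} : Finset α) = T} = (#T)! * (Fintype.card α - #T)! := by
  have hfib : ∀ σ : Equiv.Perm α, ({t | p (σ t)} : Finset α) = T ↔ ∀ t, p (σ t) ↔ t ∈ T := by
    simp [Finset.ext_iff]
  have hcard : Fintype.card T = Fintype.card {b // p b} := by
    rw [Fintype.card_coe, Fintype.card_subtype, hT]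
  have hcard' : Fintype.card {t // t ∉ T} = Fintype.card {b // ¬p b} := by
    rw [Fintype.card_subtype_compl, Fintype.card_subtype_compl, hcard]
  simp_rw [hfib]
  rw [← Fintype.card_subtype, Fintype.card_congr (Equiv.Perm.compIffEquivProd (· ∈ T) p),
    Fintype.card_prod, Fintype.card_equiv (Fintype.equivOfCardEq hcard),
    Fintype.card_equiv (Fintype.equivOfCardEq hcard'), Fintype.card_subtype_compl,
    Fintype.card_coe]

section Perm

variable {α : Type*} [Fintype α] [DecidableEq α] (p : α → Prop) [DecidablePred p]

theorem card_perm_filter_eq_mul_card_powersetCard (P : Finset α → Prop) [DecidablePred P] :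
    #{σ : Equiv.Perm α | P {t | p (σ t)}}
      = (#{b | p b})! * (Fintype.card α - #{b | p b})!
        * #{T ∈ powersetCard #{b | p b} univ | P T} := by
  rw [card_eq_sum_card_fiberwise (f := fun σ : Equiv.Perm α => ({t | p (σ t)} : Finset α))
    (t := {T ∈ powersetCard #{b | p b} univ | P T}) fun σ hσ => ?maps]
  case maps =>
    simpa [Equiv.Perm.card_filter_comp] using hσ
  rw [sum_congr rfl fun T hT => ?fiber, sum_const, smul_eq_mul, mul_comm]
  case fiber =>
    simp only [mem_filter, mem_powersetCard] at hT
    rw [filter_filter, filter_congr fun σ _ => and_iff_right_of_imp fun h => h ▸ hT.2,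
      Equiv.Perm.card_preimage_filter_eq p T hT.1.2, hT.1.2]

end Perm

section Prefix

variable {n : ℕ} (p : Fin n → Prop) [DecidablePred p]

theorem card_perm_prefix_count_lt {a k r : ℕ} (ha : #{b | p b} = a) (hk : k ≤ n) (hr : r ≤ a) :
    #{σ : Equiv.Perm (Fin n) | #{t : Fin n | ↑t < k ∧ p (σ t)} < r}
      = a ! * (n - a)! * ∑ j ∈ range r, k.choose j * (n - k).choose (a - j) := by
  set I : Finset (Fin n) := {t | ↑t < k}
  have hI : #I = k := Fin.card_filter_val_lt.trans (min_eq_right hk)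
  have hset : ∀ σ : Equiv.Perm (Fin n),
      ({t | ↑t < k ∧ p (σ t)} : Finset (Fin n)) = ({t | p (σ t)} : Finset (Fin n)) ∩ I := by
    intro σ; ext t; simp [I, and_comm]
  simp_rw [hset]
  rw [card_perm_filter_eq_mul_card_powersetCard p fun T => #(T ∩ I) < r, ha, Fintype.card_fin,
    card_filter_lt_eq_sum_card_filter_eq]
  congr 1
  refine sum_congr rfl fun j hj => ?_
  obtain ⟨i, rfl⟩ : ∃ i, a = i + j := ⟨a - j, by simp at hj; omega⟩
  rw [card_powersetCard_filter_card_inter_eq (subset_univ I), hI, card_univ_sdiff, hI,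
    Fintype.card_fin, Nat.add_sub_cancel]

theorem card_perm_prefix_count_lt_eq_zero {k r : ℕ} (hk : n ≤ k) (hr : r ≤ #{b | p b}) :
    #{σ : Equiv.Perm (Fin n) | #{t : Fin n | ↑t < k ∧ p (σ t)} < r} = 0 := by
  rw [Finset.card_eq_zero, filter_eq_empty_iff]
  intro σ _
  simp only [fun t : Fin n => iff_true_intro (t.2.trans_le hk), true_and, σ.card_filter_comp p]
  omega

theorem tsum_card_perm_prefix_count_lt_div_factorial {a r : ℕ} (ha : #{b | p b} = a)
    (hr : r ≤ a) :
    ∑' k : ℕ, (#{σ : Equiv.Perm (Fin n) | #{t : Fin n | ↑t < k ∧ p (σ t)} < r} : ℝ) / n !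
      = r * (n + 1) / (a + 1) := by
  have han : a ≤ n := ha ▸ (card_filter_le _ _).trans_eq (Fintype.card_fin n)
  rw [tsum_eq_sum (s := range (n + 1)) fun k hk => by
    rw [card_perm_prefix_count_lt_eq_zero p (by simp at hk; omega) (ha ▸ hr), Nat.cast_zero,
      zero_div]]
  have hcount : ∑ k ∈ range (n + 1),
      #{σ : Equiv.Perm (Fin n) | #{t : Fin n | ↑t < k ∧ p (σ t)} < r}
        = r * ((n + 1).choose (a + 1) * a ! * (n - a)!) := by
    rw [sum_congr rfl fun k hk => card_perm_prefix_count_lt p ha (by simp at hk; omega) hr,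
      ← mul_sum, sum_comm]
    rw [sum_congr rfl fun j hj => (Nat.sum_range_choose_mul_choose_sub n (a - j) j).trans
      (by rw [Nat.sub_add_cancel (by simp at hj; omega)]), sum_const, card_range, smul_eq_mul]
    ring
  have hfact := Nat.choose_mul_factorial_mul_factorial (Nat.succ_le_succ han)
  rw [Nat.succ_sub_succ, Nat.factorial_succ, Nat.factorial_succ] at hfact
  rw [← sum_div, ← Nat.cast_sum, hcount, div_eq_div_iff (by positivity) (by positivity)]
  have : ((n + 1).choose (a + 1) * a ! * (n - a)! : ℝ) * (a + 1) = (n + 1) * n ! := by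
    exact_mod_cast (by rw [← hfact]; ring)
  push_cast
  linear_combination (r : ℝ) * this

end Prefix

theorem Fin.image_cons_univ {α : Type*} [DecidableEq α] {k : ℕ} (v : α) (g : Fin k → α) :
    image (Fin.cons v g : Fin (k + 1) → α) univ = insert v (image g univ) := by
  ext b
  simp [Fin.exists_fin_succ, eq_comm]

section HitCount

variable {α : Type*} [DecidableEq α] (p : α → Prop) [DecidablePred p]

def hitCount {k : ℕ} (f : Fin k → α) : ℕ := #{b ∈ image f univ | p b}

theorem hitCount_fin_zero (f : Fin 0 → α) : hitCount p f = 0 := by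
  simp [hitCount]

theorem hitCount_cons {k : ℕ} (v : α) (g : Fin k → α) :
    hitCount p (Fin.cons v g : Fin (k + 1) → α)
      = if p v ∧ v ∉ image g univ then hitCount p g + 1 else hitCount p g := by
  unfold hitCount
  rw [Fin.image_cons_univ, filter_insert]
  split_ifs with h₁ h₂ h₂
  · exact card_insert_of_notMem fun hv => h₂.2 (mem_filter.1 hv).1
  · exact card_insert_of_mem (mem_filter.2 ⟨not_not.1 (not_and.1 h₂ h₁), h₁⟩)
  · exact absurd h₂.1 h₁
  · rfl

variable [Fintype α]

theorem hitCount_le {k : ℕ} (f : Fin k → α) : hitCount p f ≤ #{b | p b} :=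
  card_le_card (filter_subset_filter _ (subset_univ _))

theorem card_filter_and_notMem_image {k : ℕ} (g : Fin k → α) :
    #{v | p v ∧ v ∉ image g univ} = #{b | p b} - hitCount p g := by
  have h := card_filter_add_card_filter_not (s := ({b | p b} : Finset α)) (· ∈ image g univ)
  rw [filter_filter, filter_filter] at h
  have e : ({b | p b ∧ b ∈ image g univ} : Finset α) = {b ∈ image g univ | p b} := by
    ext; simp [and_comm]
  rw [e] at h
  unfold hitCount
  omega

theorem card_hitCount_cons_eq {k : ℕ} (g : Fin k → α) (j : ℕ) :
    #{v | hitCount p (Fin.cons v g : Fin (k + 1) → α) = j}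
      = (if hitCount p g = j then Fintype.card α - #{b | p b} + j else 0)
        + if hitCount p g + 1 = j then #{b | p b} + 1 - j else 0 := by
  have hle := hitCount_le p g
  have hfresh := card_filter_and_notMem_image p g
  have hstale := card_filter_add_card_filter_not (s := (univ : Finset α))
    (fun v => p v ∧ v ∉ image g univ)
  have hp : #{b | p b} ≤ Fintype.card α := card_filter_le _ _
  rw [card_univ] at hstale
  simp_rw [hitCount_cons]
  by_cases hj : hitCount p g = j
  · rw [filter_congr fun v _ => show _ ↔ ¬(p v ∧ v ∉ image g univ) by split_ifs <;> simp_all]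
    rw [if_pos hj, if_neg (by omega)]
    omega
  by_cases hj' : hitCount p g + 1 = j
  · rw [filter_congr fun v _ => show _ ↔ (p v ∧ v ∉ image g univ) by split_ifs <;> simp_all]
    rw [if_neg hj, if_pos hj']
    omega
  rw [if_neg hj, if_neg hj', filter_false_of_mem fun v _ => by split_ifs <;> omega, card_empty]

theorem card_hitCount_succ (k j : ℕ) :
    #{f : Fin (k + 1) → α | hitCount p f = j}
      = (Fintype.card α - #{b | p b} + j) * #{g : Fin k → α | hitCount p g = j}
        + (#{b | p b} + 1 - j) * #{g : Fin k → α | hitCount p g + 1 = j} := by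
  rw [← card_equiv (Fin.consEquiv fun _ => α)
      (s := {x | hitCount p (Fin.cons x.1 x.2 : Fin (k + 1) → α) = j}) (by simp [Fin.consEquiv]),
    card_filter, Fintype.sum_prod_type_right]
  simp_rw [← card_filter, card_hitCount_cons_eq, sum_add_distrib, ← sum_filter, sum_const,
    smul_eq_mul, mul_comm]

theorem hasSum_card_hitCount_eq_div_pow {n a j : ℕ} (hn : Fintype.card α = n)
    (ha : #{b | p b} = a) (hj : j < a) :
    HasSum (fun k => (#{f : Fin k → α | hitCount p f = j} : ℝ) / n ^ k) (n / (a - j)) := by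
  have han : a ≤ n := hn ▸ ha ▸ card_filter_le _ _
  have hn0 : (0 : ℝ) < n := by exact_mod_cast (by omega : 0 < n)
  let x (j k : ℕ) : ℝ := #{f : Fin k → α | hitCount p f = j} / n ^ k
  let y (j k : ℕ) : ℝ := #{f : Fin k → α | hitCount p f + 1 = j} / n ^ k
  have hrec : ∀ j k,
      x j (k + 1) = ((n - a + j : ℕ) / n) * x j k + ((a + 1 - j : ℕ) / n) * y j k := by
    intro j k
    simp only [x, y]
    rw [card_hitCount_succ, hn, ha]
    field_simp
    push_cast
    ring
  have hq : ∀ j < a, ((n - a + j : ℕ) / n : ℝ) < 1 := fun j hj => by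
    rw [div_lt_one hn0]
    exact_mod_cast (by omega)
  show HasSum (x j) _
  induction j with
  | zero =>
    have hy : HasSum (y 0) 0 := by
      simp [y, hasSum_zero]
    convert hasSum_of_linear_recurrence (fun k => by positivity) (fun k => by positivity) (hq 0 hj)
      (by positivity) hy (hrec 0) using 1
    simp [x, hitCount_fin_zero]
    push_cast [Nat.cast_sub han]
    rw [show 1 - ((n : ℝ) - a) / n = a / n by field_simp; ring, inv_div]
  | succ j ih =>
    have hy : HasSum (y (j + 1)) (n / (a - j)) := by
      simpa [y] using ih (by omega)
    convert hasSum_of_linear_recurrence (fun k => by positivity) (fun k => by positivity)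
      (hq (j + 1) hj) (by positivity) hy (hrec (j + 1)) using 1
    have haj : (a : ℝ) - j ≠ 0 := by
      rw [sub_ne_zero]; exact_mod_cast (by omega : a ≠ j)
    have haj' : (a : ℝ) - (j + 1) ≠ 0 := by
      rw [sub_ne_zero]; exact_mod_cast (by omega : a ≠ j + 1)
    simp [x, hitCount_fin_zero]
    push_cast [Nat.cast_sub han, Nat.cast_sub (by omega : j ≤ a)]
    rw [show ((a : ℝ) - j) / n * (n / (a - j)) = 1 by field_simp,
      show 1 - ((n : ℝ) - a + (j + 1)) / n = (a - (j + 1)) / n by field_simp; ring, one_div_div]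

theorem tsum_card_hitCount_lt_div_pow {n a r : ℕ} (hn : Fintype.card α = n) (ha : #{b | p b} = a)
    (hr : r ≤ a) :
    ∑' k : ℕ, (#{f : Fin k → α | hitCount p f < r} : ℝ) / n ^ k
      = n * ∑ j ∈ range r, 1 / ((a : ℝ) - j) := by
  have hsum : HasSum
      (fun k : ℕ => ∑ j ∈ range r, (#{f : Fin k → α | hitCount p f = j} : ℝ) / n ^ k)
      (∑ j ∈ range r, (n : ℝ) / (a - j)) :=
    hasSum_sum fun j hj => hasSum_card_hitCount_eq_div_pow p hn ha (by simp at hj; omega)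
  simp_rw [card_filter_lt_eq_sum_card_filter_eq, Nat.cast_sum, sum_div]
  rw [hsum.tsum_eq, mul_sum]
  simp_rw [mul_one_div]

end HitCount

theorem forall_le_sub_one_iff_of_lt {ι : Type*} {N x : ι → ℕ} {i₀ : ι} {r : ℕ} (hr : 0 < r)
    (hN : ∀ i, N i ≤ x i) (hsmall : ∀ i, i ≠ i₀ → x i < r) :
    (∀ i, N i ≤ r - 1) ↔ N i₀ < r := by
  refine ⟨fun h => by have := h i₀; omega, fun h i => ?_⟩
  rcases eq_or_ne i i₀ with rfl | hi
  · omega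
  · have := hN i; have := hsmall i hi; omega

theorem expected_collision_time_one_large_cell_general
    (n m r a : ℕ) (x : Fin m → ℕ) (c : Fin n → Fin m) (i₀ : Fin m)
    (hx : ∀ i, (Finset.univ.filter (fun b : Fin n => c b = i)).card = x i)
    (hr : 2 ≤ r)
    (ha : x i₀ = a) (har : r ≤ a) (hsmall : ∀ i, i ≠ i₀ → x i < r) :
    (∑' k : ℕ,
        ((Nat.card {σ : Equiv.Perm (Fin n) // ∀ i : Fin m,
            (Finset.univ.filter (fun t : Fin n => t.val < k ∧ c (σ t) = i)).card ≤ r - 1} : ℝ)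
          / (Nat.factorial n : ℝ)))
      = (r : ℝ) * (n + 1) / (a + 1)
    ∧ (∑' k : ℕ,
        ((Nat.card {f : Fin k → Fin n // ∀ i : Fin m,
            ((Finset.image f Finset.univ).filter (fun b : Fin n => c b = i)).card ≤ r - 1} : ℝ)
          / (n ^ k : ℝ)))
      = (n : ℝ) * ∑ i ∈ Finset.range r, (1 : ℝ) / ((a : ℝ) - i) := by
  have hS : #{b | c b = i₀} = a := (hx i₀).trans ha
  have hr0 : 0 < r := by omega
  have hperm : ∀ k : ℕ, Nat.card {σ : Equiv.Perm (Fin n) // ∀ i : Fin m,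
      #{t : Fin n | t.val < k ∧ c (σ t) = i} ≤ r - 1}
        = #{σ : Equiv.Perm (Fin n) | #{t : Fin n | ↑t < k ∧ c (σ t) = i₀} < r} := fun k => by
    rw [Nat.card_eq_fintype_card, Fintype.card_subtype]
    refine congrArg card (filter_congr fun σ _ =>
      forall_le_sub_one_iff_of_lt hr0 (fun i => ?_) hsmall)
    exact (card_le_card (monotone_filter_right _ fun _ _ h => h.2)).trans
      ((σ.card_filter_comp _).trans (hx i)).le
  have hfun : ∀ k : ℕ, Nat.card {f : Fin k → Fin n // ∀ i : Fin m,
      #{b ∈ image f univ | c b = i} ≤ r - 1}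
        = #{f : Fin k → Fin n | hitCount (fun b => c b = i₀) f < r} := fun k => by
    rw [Nat.card_eq_fintype_card, Fintype.card_subtype]
    exact congrArg card (filter_congr fun f _ => forall_le_sub_one_iff_of_lt hr0
      (fun i => (hitCount_le _ f).trans (hx i).le) hsmall)
  simp_rw [hperm, hfun]
  exact ⟨tsum_card_perm_prefix_count_lt_div_factorial (fun b => c b = i₀) hS har,
    tsum_card_hitCount_lt_div_pow (fun b => c b = i₀) (Fintype.card_fin n) hS har⟩

/-- If exactly one colour `i₀` has preimage size `x i₀ = a ≥ r` (all others `< r`), then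
`E(K_r^{(1)}) = r(n+1)/(a+1)` and `E(K_r^{(2)}) = n ∑_{i=0}^{r-1} 1/(a-i)`
(expectations written as `∑_{k≥0} P(K > k)`). -/
theorem expected_collision_time_one_large_cell
    (n m r a : ℕ) (x : Fin m → ℕ) (c : Fin n → Fin m) (i₀ : Fin m)
    (hx : ∀ i, (Finset.univ.filter (fun b : Fin n => c b = i)).card = x i)
    (hn : ∑ i, x i = n) (hr : 2 ≤ r)
    (ha : x i₀ = a) (har : r ≤ a) (hsmall : ∀ i, i ≠ i₀ → x i < r) :
    (∑' k : ℕ,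
        ((Nat.card {σ : Equiv.Perm (Fin n) // ∀ i : Fin m,
            (Finset.univ.filter (fun t : Fin n => t.val < k ∧ c (σ t) = i)).card ≤ r - 1} : ℝ)
          / (Nat.factorial n : ℝ)))
      = (r : ℝ) * (n + 1) / (a + 1)
    ∧ (∑' k : ℕ,
        ((Nat.card {f : Fin k → Fin n // ∀ i : Fin m,
            ((Finset.image f Finset.univ).filter (fun b : Fin n => c b = i)).card ≤ r - 1} : ℝ)
          / (n ^ k : ℝ)))
      = (n : ℝ) * ∑ i ∈ Finset.range r, (1 : ℝ) / ((a : ℝ) - i) :=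
  expected_collision_time_one_large_cell_general n m r a x c i₀ hx hr ha har hsmall
end

section
/- Let X be binomially distributed with parameters n and p, and let r < n. Then P(X < r) ≥ (1 - p^r)^{binom(n,r)}. -/
/-!
Condition on the last of the `n + 1` trials: `P_{n+1}(X < r + 1) = (1 - p) P_n(X < r + 1) + p P_n(X < r)`,
while `binom(n+1, r+1) = binom(n, r) + binom(n, r+1)`. Hence it suffices, after the induction
hypothesis, that `u ^ (b + a) ≤ (1 - p) u ^ a + p v ^ b` for `v = 1 - p ^ r` and
`u = 1 - p ^ (r + 1) = (1 - p) + p v`; this follows from the convexity of `x ↦ x ^ b`, which gives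
`u ^ b ≤ (1 - p) + p v ^ b`, together with `u ^ a ≤ 1`.
-/

open Finset

section Binomial

variable {R : Type*} [CommRing R] (p : R)

/-- `P(X < r)` for `X ~ Binomial(n, p)`. -/
def binomialLowerTail (n r : ℕ) : R :=
  ∑ i ∈ range r, (n.choose i : R) * p ^ i * (1 - p) ^ (n - i)

@[simp]
theorem binomialLowerTail_zero_right (n : ℕ) : binomialLowerTail p n 0 = 0 := by
  simp [binomialLowerTail]

@[simp]
theorem binomialLowerTail_zero_succ (r : ℕ) : binomialLowerTail p 0 (r + 1) = 1 := by
  simp [binomialLowerTail, sum_range_succ', Nat.choose_eq_zero_of_lt]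

theorem binomialLowerTail_succ_succ (n r : ℕ) :
    binomialLowerTail p (n + 1) (r + 1) =
      (1 - p) * binomialLowerTail p n (r + 1) + p * binomialLowerTail p n r := by
  have pascal : ∀ i, ((n + 1).choose (i + 1) : R) * p ^ (i + 1) * (1 - p) ^ (n + 1 - (i + 1)) =
      (1 - p) * ((n.choose (i + 1) : R) * p ^ (i + 1) * (1 - p) ^ (n - (i + 1)))
        + p * ((n.choose i : R) * p ^ i * (1 - p) ^ (n - i)) := by
    intro i
    rcases le_or_gt (i + 1) n with hi | hi
    · obtain ⟨k, rfl⟩ := Nat.exists_eq_add_of_le hi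
      simp only [Nat.choose_succ_succ, Nat.add_sub_add_right, Nat.add_sub_cancel_left,
        show i + 1 + k - i = k + 1 by omega]
      push_cast
      ring
    · rw [Nat.choose_succ_succ, Nat.choose_eq_zero_of_lt hi, Nat.add_sub_add_right]
      push_cast
      ring
  simp only [binomialLowerTail, sum_range_succ' _ r, pascal, sum_add_distrib, ← mul_sum]
  simp only [Nat.choose_zero_right, Nat.cast_one, pow_zero, Nat.sub_zero]
  ring

end Binomial

theorem one_sub_add_mul_pow_le {p x : ℝ} (hp0 : 0 ≤ p) (hp1 : p ≤ 1) (hx : 0 ≤ x) (b : ℕ) :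
    (1 - p + p * x) ^ b ≤ 1 - p + p * x ^ b := by
  simpa using (convexOn_pow b).2 (Set.mem_Ici.2 zero_le_one) (Set.mem_Ici.2 hx)
    (sub_nonneg.2 hp1) hp0 (by ring)

theorem one_sub_add_mul_pow_add_le {p v : ℝ} (hp0 : 0 ≤ p) (hp1 : p ≤ 1) (hv0 : 0 ≤ v)
    (hv1 : v ≤ 1) (a b : ℕ) :
    (1 - p + p * v) ^ (b + a) ≤ (1 - p) * (1 - p + p * v) ^ a + p * v ^ b := by
  have hu0 : 0 ≤ 1 - p + p * v := by nlinarith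
  have hua0 : 0 ≤ (1 - p + p * v) ^ a := pow_nonneg hu0 a
  have hua1 : (1 - p + p * v) ^ a ≤ 1 := pow_le_one₀ hu0 (by nlinarith)
  have hvb0 : 0 ≤ v ^ b := pow_nonneg hv0 b
  calc (1 - p + p * v) ^ (b + a) = (1 - p + p * v) ^ b * (1 - p + p * v) ^ a := pow_add _ _ _
    _ ≤ (1 - p + p * v ^ b) * (1 - p + p * v) ^ a :=
        mul_le_mul_of_nonneg_right (one_sub_add_mul_pow_le hp0 hp1 hv0 b) hua0
    _ ≤ (1 - p) * (1 - p + p * v) ^ a + p * v ^ b := by nlinarith [mul_nonneg hp0 hvb0]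

theorem one_sub_pow_pow_choose_le_binomialLowerTail {p : ℝ} (hp0 : 0 ≤ p) (hp1 : p ≤ 1)
    (n r : ℕ) : (1 - p ^ r) ^ n.choose r ≤ binomialLowerTail p n r := by
  induction n generalizing r with
  | zero => cases r <;> simp
  | succ n ih =>
    cases r with
    | zero => simp
    | succ r =>
      have hv0 : 0 ≤ 1 - p ^ r := sub_nonneg.2 (pow_le_one₀ hp0 hp1)
      have hv1 : 1 - p ^ r ≤ 1 := sub_le_self _ (pow_nonneg hp0 r)
      calc (1 - p ^ (r + 1)) ^ (n + 1).choose (r + 1)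
          = (1 - p + p * (1 - p ^ r)) ^ (n.choose r + n.choose (r + 1)) := by
            rw [Nat.choose_succ_succ]; ring
        _ ≤ (1 - p) * (1 - p ^ (r + 1)) ^ n.choose (r + 1) + p * (1 - p ^ r) ^ n.choose r := by
            convert one_sub_add_mul_pow_add_le hp0 hp1 hv0 hv1 _ _ using 3; ring
        _ ≤ (1 - p) * binomialLowerTail p n (r + 1) + p * binomialLowerTail p n r := by
            gcongr <;> apply ih
        _ = binomialLowerTail p (n + 1) (r + 1) := (binomialLowerTail_succ_succ p n r).symm

theorem binomial_tail_lower_bound_general (n r : ℕ) (p : ℝ) (hp0 : 0 ≤ p) (hp1 : p ≤ 1) :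
    (1 - p ^ r) ^ (Nat.choose n r)
      ≤ ∑ i ∈ Finset.range r, (Nat.choose n i : ℝ) * p ^ i * (1 - p) ^ (n - i) :=
  one_sub_pow_pow_choose_le_binomialLowerTail hp0 hp1 n r

/-- For `X ~ Binomial(n,p)` and `r < n`: `P(X < r) ≥ (1 - p^r)^{binom(n,r)}`. -/
theorem binomial_tail_lower_bound (n r : ℕ) (p : ℝ) (hp0 : 0 ≤ p) (hp1 : p ≤ 1)
    (hr : r < n) :
    (1 - p ^ r) ^ (Nat.choose n r)
      ≤ ∑ i ∈ Finset.range r, (Nat.choose n i : ℝ) * p ^ i * (1 - p) ^ (n - i) :=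
  binomial_tail_lower_bound_general n r p hp0 hp1
end

section
/- For all s ≥ 0 and integers n > r ≥ 1: -log G_r(n, 1-e^{-s}) ≤ binom(n,r) s^r, i.e. G_r(n, 1-e^{-s}) ≥ exp(-binom(n,r) s^r), where G_r(n,t) = sum_{i=0}^{r-1} binom(n,i) t^i (1-t)^{n-i}. -/
open Finset

/-- `G_r(n,t) = ∑_{i=0}^{r-1} binom(n,i) t^i (1-t)^{n-i}`. -/
noncomputable def Gr (r n : ℕ) (t : ℝ) : ℝ :=
  ∑ i ∈ Finset.range r, (Nat.choose n i : ℝ) * t ^ i * (1 - t) ^ (n - i)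

/-!
Put `t = 1 - e^{-s}` and `g s = G_r(n, t)`. Since
`∂_t G_r(n,t) = -r binom(n,r) t^{r-1} (1-t)^{n-r}`, `dt/ds = 1 - t`, `t ≤ s` and
`G_r(n,t) ≥ (1-t)^{n-r+1}`, we get `-g' ≤ r binom(n,r) s^{r-1} g`. Hence
`g s · exp(binom(n,r) s^r)` is nondecreasing on `[0, ∞)`, so it is at least its value `1` at `0`.
-/

theorem Gr_zero_right {r : ℕ} (hr : 0 < r) (n : ℕ) : Gr r n 0 = 1 := by
  rw [Gr, sum_eq_single_of_mem 0 (mem_range.mpr hr)]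
  · simp
  · intro i _ hi
    simp [zero_pow hi]

theorem Gr_succ (r n : ℕ) :
    Gr (r + 1) n = fun t => Gr r n t + (n.choose r : ℝ) * t ^ r * (1 - t) ^ (n - r) := by
  funext t
  exact sum_range_succ _ _

theorem hasDerivAt_Gr (r n : ℕ) (t : ℝ) :
    HasDerivAt (Gr r n) (-(r * n.choose r * t ^ (r - 1) * (1 - t) ^ (n - r))) t := by
  induction r with
  | zero =>
    have h0 : Gr 0 n = fun _ => 0 := by funext; simp [Gr]
    rw [h0]
    simpa using hasDerivAt_const t (0 : ℝ)
  | succ r ih =>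
    have hterm := (((hasDerivAt_id' t).fun_pow r).const_mul (n.choose r : ℝ)).fun_mul
      (((hasDerivAt_id' t).const_sub 1).fun_pow (n - r))
    have hchoose : (n.choose (r + 1) : ℝ) * (r + 1) = n.choose r * ((n - r : ℕ) : ℝ) := by
      exact_mod_cast Nat.choose_succ_right_eq n r
    rw [Gr_succ]
    refine (ih.fun_add hterm).congr_deriv ?_
    rw [Nat.add_sub_cancel, Nat.sub_sub]
    push_cast
    linear_combination t ^ r * (1 - t) ^ (n - (r + 1)) * hchoose

/-- Fewer than `r` of `n` trials succeed as soon as the last `n - r + 1` of them fail. -/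
theorem one_sub_pow_le_Gr {r n : ℕ} (hr : 0 < r) (hrn : r ≤ n) {t : ℝ} (ht0 : 0 ≤ t)
    (ht1 : t ≤ 1) : (1 - t) ^ (n - r + 1) ≤ Gr r n t := by
  calc (1 - t) ^ (n - r + 1) = (t + (1 - t)) ^ (r - 1) * (1 - t) ^ (n - r + 1) := by simp
    _ = ∑ i ∈ range r, ((r - 1).choose i : ℝ) * t ^ i * (1 - t) ^ (n - i) := by
      rw [add_pow, Nat.sub_add_cancel hr, sum_mul]
      refine sum_congr rfl fun i hi => ?_
      rw [show n - i = (r - 1 - i) + (n - r + 1) by grind, pow_add]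
      ring
    _ ≤ Gr r n t := by
      have : 0 ≤ 1 - t := by linarith
      refine sum_le_sum fun i hi => ?_
      have hchoose : ((r - 1).choose i : ℝ) ≤ n.choose i := by
        exact_mod_cast Nat.choose_le_choose i (by omega)
      gcongr

theorem neg_deriv_Gr_mul_one_sub_le {r : ℕ} (hr : 0 < r) (n : ℕ) {t s : ℝ} (ht0 : 0 ≤ t)
    (ht1 : t ≤ 1) (hts : t ≤ s) :
    r * n.choose r * t ^ (r - 1) * (1 - t) ^ (n - r) * (1 - t) ≤
      Gr r n t * (n.choose r * (r * s ^ (r - 1))) := by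
  rcases lt_or_ge n r with hnr | hrn
  · simp [Nat.choose_eq_zero_of_lt hnr]
  calc r * n.choose r * t ^ (r - 1) * (1 - t) ^ (n - r) * (1 - t)
      = r * n.choose r * (t ^ (r - 1) * (1 - t) ^ (n - r + 1)) := by ring
    _ ≤ r * n.choose r * (s ^ (r - 1) * Gr r n t) := by
      gcongr
      · exact pow_nonneg (ht0.trans hts) _
      · exact one_sub_pow_le_Gr hr hrn ht0 ht1
    _ = Gr r n t * (n.choose r * (r * s ^ (r - 1))) := by ring

theorem monotoneOn_mul_exp {g φ g' φ' : ℝ → ℝ} {a : ℝ} (hg : ∀ x, HasDerivAt g (g' x) x)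
    (hφ : ∀ x, HasDerivAt φ (φ' x) x) (h : ∀ x, a < x → -g' x ≤ g x * φ' x) :
    MonotoneOn (fun x => g x * Real.exp (φ x)) (Set.Ici a) := by
  have hderiv x : HasDerivAt (fun x => g x * Real.exp (φ x))
      (Real.exp (φ x) * (g' x + g x * φ' x)) x :=
    ((hg x).fun_mul (hφ x).exp).congr_deriv (by ring)
  refine monotoneOn_of_hasDerivWithinAt_nonneg (convex_Ici a)
    (fun x _ => (hderiv x).continuousAt.continuousWithinAt)
    (fun x _ => (hderiv x).hasDerivWithinAt) fun x hx => ?_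
  rw [interior_Ici] at hx
  exact mul_nonneg (Real.exp_pos _).le (by linarith [h x hx])

theorem monotoneOn_Gr_one_sub_exp_neg_mul_exp {r : ℕ} (hr : 0 < r) (n : ℕ) :
    MonotoneOn (fun s => Gr r n (1 - Real.exp (-s)) * Real.exp (n.choose r * s ^ r))
      (Set.Ici 0) := by
  have hinner s : HasDerivAt (fun s => 1 - Real.exp (-s)) (Real.exp (-s)) s := by
    simpa using ((hasDerivAt_neg s).exp).const_sub 1
  refine monotoneOn_mul_exp (fun s => (hasDerivAt_Gr r n _).comp s (hinner s))
    (fun s => (hasDerivAt_pow r s).const_mul _) fun s hs => ?_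
  have ht1 : Real.exp (-s) ≤ 1 := Real.exp_le_one_iff.mpr (by linarith)
  have hts : 1 - Real.exp (-s) ≤ s := by linarith [Real.add_one_le_exp (-s)]
  have hbound :=
    neg_deriv_Gr_mul_one_sub_le hr n (by linarith) (by linarith [Real.exp_pos (-s)]) hts
  simpa only [Function.comp_apply, neg_mul, neg_neg, sub_sub_cancel] using hbound

theorem neg_log_Gr_le_general (n r : ℕ) (hr : 1 ≤ r) (s : ℝ) (hs : 0 ≤ s) :
    -Real.log (Gr r n (1 - Real.exp (-s))) ≤ (Nat.choose n r : ℝ) * s ^ r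
    ∧ Real.exp (-(Nat.choose n r : ℝ) * s ^ r) ≤ Gr r n (1 - Real.exp (-s)) := by
  have hone := monotoneOn_Gr_one_sub_exp_neg_mul_exp hr n Set.self_mem_Ici hs hs
  simp only [neg_zero, Real.exp_zero, sub_self, Gr_zero_right hr, zero_pow (by omega : r ≠ 0),
    mul_zero, one_mul] at hone
  have hexp : Real.exp (-(n.choose r : ℝ) * s ^ r) ≤ Gr r n (1 - Real.exp (-s)) := by
    rw [neg_mul, Real.exp_neg, inv_le_iff_one_le_mul₀ (Real.exp_pos _)]
    exact hone
  refine ⟨?_, hexp⟩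
  have hlog := Real.log_le_log (Real.exp_pos _) hexp
  rw [Real.log_exp] at hlog
  linarith

/-- For `s ≥ 0` and `n > r ≥ 1`:
`-log G_r(n, 1-e^{-s}) ≤ binom(n,r) s^r`, i.e.
`G_r(n, 1-e^{-s}) ≥ exp(-binom(n,r) s^r)`. -/
theorem neg_log_Gr_le (n r : ℕ) (hr : 1 ≤ r) (hn : r < n) (s : ℝ) (hs : 0 ≤ s) :
    -Real.log (Gr r n (1 - Real.exp (-s))) ≤ (Nat.choose n r : ℝ) * s ^ r
    ∧ Real.exp (-(Nat.choose n r : ℝ) * s ^ r) ≤ Gr r n (1 - Real.exp (-s)) :=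
  neg_log_Gr_le_general n r hr s hs
end
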